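/- arXiv:1905.02508 — 6 statements merged into one kernel-verified Lean document; each statement's English description precedes it below -/
import Mathlib

section
/- The following are equivalent: (i) identity of forces of mortality: H̃_j(t) = H_j(t) for all t ∈ 𝒥 and all j = 1,…,d; (ii) the constant-sum property: for every j = 1,…,d and every Borel set A ⊆ 𝒥, μ̃_j(A) = ∫_A (1 − B(s)) μ_j(ds), where B(s) = ∫_{[0,s)} S(u)^{-1} μ̃₀(du). (Condition (ii) is the integrated form of the statement that a_j(t) + B(t) = 1 for μ_j-almost all t ∈ 𝒥, where a_j(t) = P(T̃ = t, D̃ = j | T = t, D = j).) -/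
open MeasureTheory Set ENNReal Filter Topology

/-!
Both directions go through the identity `S(s-) = S̃(s-) + S(s-) B(s)`, i.e.
`1 - B(s) = S̃(s-) / S(s-)`, on `(0, t]` for `t ∈ 𝒥`. Splitting `1 = S̃(s-) + P(T̃ < s)` by exit
type and rewriting the censored part `μ̃₀[0, s)` by Fubini as `S(s-) B(s) + ∫_{(0,s)} B dF`
(`F` the law of `T`) gives
`S̃(s-) + S(s-) B(s) + ∫_{(0,s)} B dF + ∑ⱼ μ̃ⱼ(0, s) = 1 = S(s-) + F(0, s)`.
Under the constant-sum property the sum is `∫_{(0,s)} (1 - B) dF`; this forces `B ≤ 1`, and then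
the identity. Under identity of forces the `μ̃ⱼ` have densities `S̃(·-) / S(·-)` with respect to
the `μⱼ`, so `S(·-)` and `S̃(·-) + S(·-) B` both solve `p(s) + ∫_{(0,s)} p / S(·-) dF = 1`, a
Volterra equation whose bounded solutions are unique by a Gronwall argument. Given the identity,
the hazards `dH̃ⱼ = dμ̃ⱼ / S̃(·-)` and the densities `1 - B` determine each other on every `(0, t]`,
and countably many such intervals exhaust `𝒥`.
-/

theorem ENNReal.tsub_le_tsub_of_add_eq_add {a b x y : ℝ≥0∞} (hx : x ≠ ∞) (h : a + x = b + y) :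
    a - b ≤ y - x := by
  rw [tsub_le_iff_left]
  refine ENNReal.le_of_add_le_add_right hx ?_
  calc a + x = b + y := h
    _ ≤ b + (y - x + x) := add_le_add_right le_tsub_add b
    _ = b + (y - x) + x := (add_assoc _ _ _).symm

theorem ENNReal.one_sub_eq_div_of_eq_add_mul {a b c : ℝ≥0∞} (h : a = b + a * c) (ha : a ≠ 0)
    (ha' : a ≠ ∞) (hc : c ≠ ∞) : 1 - c = b / a := by
  rw [ENNReal.eq_div_iff ha ha', ENNReal.mul_sub fun _ _ => ha', mul_one]
  exact ENNReal.sub_eq_of_eq_add (ENNReal.mul_ne_top ha' hc) h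

theorem eq_zero_of_le_setLIntegral_Ioo_of_measure_lt_one {κ : Measure ℝ} {f : ℝ → ℝ≥0∞}
    {x y : ℝ} {C : ℝ≥0∞} (hC : C ≠ ∞) (hfC : ∀ s ∈ Ioc x y, f s ≤ C) (hκ : κ (Ioo x y) < 1)
    (h : ∀ s ∈ Ioc x y, f s ≤ ∫⁻ u in Ioo x s, f u ∂κ) : ∀ s ∈ Ioc x y, f s = 0 := by
  set M := ⨆ s ∈ Ioc x y, f s
  have hM : M ≤ M * κ (Ioo x y) := iSup₂_le fun s hs => calc
    f s ≤ ∫⁻ u in Ioo x s, f u ∂κ := h s hs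
    _ ≤ ∫⁻ _ in Ioo x s, M ∂κ := setLIntegral_mono' measurableSet_Ioo fun u hu =>
      le_iSup₂ (f := fun s _ => f s) u ⟨hu.1, hu.2.le.trans hs.2⟩
    _ = M * κ (Ioo x s) := setLIntegral_const _ _
    _ ≤ M * κ (Ioo x y) := by gcongr; exact hs.2
  have hM0 : M = 0 := by
    by_contra hM0
    have hMtop : M ≠ ∞ := ne_top_of_le_ne_top hC (iSup₂_le hfC)
    have := ENNReal.mul_lt_mul_left hM0 hMtop hκ
    rw [one_mul, mul_comm] at this
    exact hM.not_gt this
  exact fun s hs => le_antisymm ((le_iSup₂ (f := fun s _ => f s) s hs).trans hM0.le) bot_le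

theorem eq_zero_of_le_setLIntegral_Ioo {κ : Measure ℝ} [IsFiniteMeasure κ] {f : ℝ → ℝ≥0∞}
    {a b : ℝ} {C : ℝ≥0∞} (hC : C ≠ ∞) (hfC : ∀ s ∈ Ioc a b, f s ≤ C)
    (h : ∀ s ∈ Ioc a b, f s ≤ ∫⁻ u in Ioo a s, f u ∂κ) : ∀ s ∈ Ioc a b, f s = 0 := by
  -- continuous induction on the closed set of `t` such that `f` vanishes on `(a, t)`
  set Z := {t | ∀ u ∈ Ioo a t, f u = 0}
  have hZ : Z = ⋂ u ∈ {u | a < u ∧ f u ≠ 0}, Iic u := by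
    ext t
    simp only [Z, mem_ofPred_eq, mem_iInter, mem_Iic, mem_Ioo]
    exact ⟨fun ht u hu => not_lt.1 fun hut => hu.2 (ht u ⟨hu.1, hut⟩),
      fun ht u hu => by_contra fun hfu => (ht u ⟨hu.1, hfu⟩).not_gt hu.2⟩
  have hvanish : ∀ t ∈ Z, t ≤ b → ∀ u ∈ Ioc a t, f u = 0 := by
    intro t ht htb u hu
    rcases hu.2.lt_or_eq with hut | rfl
    · exact ht u ⟨hu.1, hut⟩
    · refine le_antisymm ((h u ⟨hu.1, htb⟩).trans_eq ?_) bot_le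
      exact (setLIntegral_congr_fun measurableSet_Ioo ht).trans lintegral_zero
  have hstep : ∀ x ∈ Z ∩ Ico a b, Z ∈ 𝓝[>] x := by
    rintro x ⟨hx, hxa, hxb⟩
    have hlim : Tendsto (fun y => κ (Ioo x y)) (𝓝[>] x) (𝓝 0) := by
      have hempty : (⋂ y > x, Ioo x y) = ∅ := eq_empty_of_forall_notMem fun u hu =>
        lt_irrefl u (mem_iInter₂.1 hu u (mem_iInter₂.1 hu (x + 1) (by linarith)).1).2
      have h := tendsto_measure_biInter_gt (μ := κ) (s := Ioo x) (a := x)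
        (fun _ _ => nullMeasurableSet_Ioo) (fun _ _ _ hij => Ioo_subset_Ioo_right hij)
        ⟨x + 1, by linarith, measure_ne_top κ _⟩
      rw [hempty, measure_empty] at h
      exact h
    obtain ⟨y, hy, hxy, hyb⟩ :=
      ((hlim.eventually (gt_mem_nhds zero_lt_one)).and (Ioc_mem_nhdsGT hxb)).exists
    have hfx := hvanish x hx hxb.le
    have hfy : ∀ s ∈ Ioc x y, f s = 0 := by
      refine eq_zero_of_le_setLIntegral_Ioo_of_measure_lt_one hC
        (fun s hs => hfC s ⟨hxa.trans_lt hs.1, hs.2.trans hyb⟩) hy fun s hs => ?_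
      have hfs := h s ⟨hxa.trans_lt hs.1, hs.2.trans hyb⟩
      rwa [← Ioc_union_Ioo_eq_Ioo hxa hs.1, lintegral_union measurableSet_Ioo
        (disjoint_left.2 fun u hu hu' => hu'.1.not_ge hu.2),
        (setLIntegral_congr_fun measurableSet_Ioc hfx).trans lintegral_zero, zero_add] at hfs
    refine mem_nhdsWithin_of_mem_nhds (mem_of_superset (Iic_mem_nhds hxy) fun t ht u hu => ?_)
    rcases le_or_gt u x with hux | hux
    exacts [hfx u ⟨hu.1, hux⟩, hfy u ⟨hux, hu.2.le.trans ht⟩]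
  intro s hs
  have hab : Icc a b ⊆ Z := (hZ ▸ isClosed_biInter fun _ _ => isClosed_Iic).inter isClosed_Icc
    |>.Icc_subset_of_forall_mem_nhdsWithin (fun u hu => (hu.1.trans hu.2).false.elim) hstep
  exact hvanish b (hab ⟨hs.1.le.trans hs.2, le_rfl⟩) le_rfl s hs

theorem eqOn_of_add_setLIntegral_eq {κ : Measure ℝ} [IsFiniteMeasure κ] {p q : ℝ → ℝ≥0∞}
    (hp : Measurable p) (hq : Measurable q) {a b : ℝ} {C : ℝ≥0∞} (hC : C ≠ ∞)
    (hpC : ∀ s ∈ Ioc a b, p s ≤ C) (hqC : ∀ s ∈ Ioc a b, q s ≤ C)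
    (h : ∀ s ∈ Ioc a b, p s + ∫⁻ u in Ioo a s, p u ∂κ = q s + ∫⁻ u in Ioo a s, q u ∂κ) :
    EqOn p q (Ioc a b) := by
  set f := fun u => (p u - q u) ⊔ (q u - p u)
  have hint_ne_top : ∀ g : ℝ → ℝ≥0∞, (∀ s ∈ Ioc a b, g s ≤ C) → ∀ s ∈ Ioc a b,
      ∫⁻ u in Ioo a s, g u ∂κ ≠ ∞ := fun g hg s hs =>
    ne_top_of_le_ne_top (ENNReal.mul_ne_top hC (measure_ne_top κ (Ioo a s)))
      ((setLIntegral_mono' measurableSet_Ioo fun u hu => hg u ⟨hu.1, hu.2.le.trans hs.2⟩).trans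
        (setLIntegral_const _ _).le)
  have hf : ∀ s ∈ Ioc a b, f s ≤ ∫⁻ u in Ioo a s, f u ∂κ := fun s hs => sup_le
    (calc p s - q s ≤ ∫⁻ u in Ioo a s, q u ∂κ - ∫⁻ u in Ioo a s, p u ∂κ :=
          ENNReal.tsub_le_tsub_of_add_eq_add (hint_ne_top p hpC s hs) (h s hs)
      _ ≤ ∫⁻ u in Ioo a s, q u - p u ∂κ := lintegral_sub_le' _ _ hp.aemeasurable
      _ ≤ ∫⁻ u in Ioo a s, f u ∂κ := lintegral_mono fun u => le_sup_right)
    (calc q s - p s ≤ ∫⁻ u in Ioo a s, p u ∂κ - ∫⁻ u in Ioo a s, q u ∂κ :=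
          ENNReal.tsub_le_tsub_of_add_eq_add (hint_ne_top q hqC s hs) (h s hs).symm
      _ ≤ ∫⁻ u in Ioo a s, p u - q u ∂κ := lintegral_sub_le' _ _ hq.aemeasurable
      _ ≤ ∫⁻ u in Ioo a s, f u ∂κ := lintegral_mono fun u => le_sup_left)
  intro s hs
  have hfs := eq_zero_of_le_setLIntegral_Ioo hC
    (fun s hs => sup_le (tsub_le_self.trans (hpC s hs)) (tsub_le_self.trans (hqC s hs))) hf s hs
  rw [← bot_eq_zero, sup_eq_bot_iff, bot_eq_zero, tsub_eq_zero_iff_le, tsub_eq_zero_iff_le] at hfs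
  exact le_antisymm hfs.1 hfs.2

theorem setLIntegral_measure_Ioo_mul_eq {m ν : Measure ℝ} [SFinite m] [SFinite ν]
    {g : ℝ → ℝ≥0∞} (hg : Measurable g) (a s : ℝ) :
    ∫⁻ v in Ico a s, ν (Ioo v s) * g v ∂m = ∫⁻ u in Ioo a s, ∫⁻ v in Ico a u, g v ∂m ∂ν := by
  set W := {p : ℝ × ℝ | a ≤ p.1 ∧ p.1 < p.2 ∧ p.2 < s}
  set F : ℝ → ℝ → ℝ≥0∞ := fun v u => W.indicator (fun p => g p.1) (v, u)
  have hW : MeasurableSet W := (measurableSet_le measurable_const measurable_fst).inter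
    ((measurableSet_lt measurable_fst measurable_snd).inter
      (measurableSet_lt measurable_snd measurable_const))
  have hv : ∀ v, ∫⁻ u, F v u ∂ν = (Ico a s).indicator (fun v => ν (Ioo v s) * g v) v := by
    intro v
    by_cases hv : v ∈ Ico a s
    · have : F v = (Ioo v s).indicator fun _ => g v := by
        ext u; simp [F, W, indicator_apply, hv.1]
      rw [this, lintegral_indicator_const measurableSet_Ioo, indicator_of_mem hv, mul_comm]
    · have : F v = fun _ => 0 := by
        ext u
        simp only [F, W, indicator_apply, mem_ofPred_eq, ite_eq_right_iff]
        exact fun hvu => absurd ⟨hvu.1, hvu.2.1.trans hvu.2.2⟩ hv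
      rw [this, lintegral_zero, indicator_of_notMem hv]
  have hu : ∀ u, ∫⁻ v, F v u ∂m = (Ioo a s).indicator (fun u => ∫⁻ v in Ico a u, g v ∂m) u := by
    intro u
    by_cases hu : u ∈ Ioo a s
    · have : (fun v => F v u) = (Ico a u).indicator g := by
        ext v; simp [F, W, indicator_apply, hu.2, and_comm]
      rw [this, lintegral_indicator measurableSet_Ico, indicator_of_mem hu]
    · have : (fun v => F v u) = fun _ => 0 := by
        ext v
        simp only [F, W, indicator_apply, mem_ofPred_eq, ite_eq_right_iff]
        exact fun hvu => absurd ⟨hvu.1.trans_lt hvu.2.1, hvu.2.2⟩ hu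
      rw [this, lintegral_zero, indicator_of_notMem hu]
  calc ∫⁻ v in Ico a s, ν (Ioo v s) * g v ∂m = ∫⁻ v, ∫⁻ u, F v u ∂ν ∂m := by
        simp_rw [hv]; exact (lintegral_indicator measurableSet_Ico _).symm
    _ = ∫⁻ u, ∫⁻ v, F v u ∂m ∂ν :=
        lintegral_lintegral_swap ((hg.comp measurable_fst).indicator hW).aemeasurable
    _ = ∫⁻ u in Ioo a s, ∫⁻ v in Ico a u, g v ∂m ∂ν := by
        simp_rw [hu]; exact lintegral_indicator measurableSet_Ioo _

theorem measure_Ico_eq_measure_Ioo {ρ : Measure ℝ} (h : ρ (Iic 0) = 0) (s : ℝ) :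
    ρ (Ico 0 s) = ρ (Ioo 0 s) :=
  measure_congr (ae_eq_set.2
    ⟨measure_mono_null (fun _ hx => not_lt.1 fun h0 => hx.2 ⟨h0, hx.1.2⟩) h,
      by rw [sdiff_eq_empty.2 Ioo_subset_Ico_self, measure_empty]⟩)

theorem restrict_Iic_eq_restrict_Ioc {ρ : Measure ℝ} (h : ρ (Iic 0) = 0) (t : ℝ) :
    ρ.restrict (Iic t) = ρ.restrict (Ioc 0 t) :=
  Measure.restrict_congr_set (ae_eq_set.2
    ⟨measure_mono_null (fun _ hx => not_lt.1 fun h0 => hx.2 ⟨h0, hx.1⟩) h,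
      by rw [sdiff_eq_empty.2 Ioc_subset_Iic_self, measure_empty]⟩)

theorem measure_eq_of_forall_restrict_Iic_eq {ρ ν : Measure ℝ} {J : Set ℝ}
    (hJ : ∀ x ∈ J, ∃ q : ℚ, x ≤ q ∧ (q : ℝ) ∈ J)
    (h : ∀ t ∈ J, ρ.restrict (Iic t) = ν.restrict (Iic t)) {A : Set ℝ} (hA : A ⊆ J) :
    ρ A = ν A := by
  set U := ⋃ q : {q : ℚ // (q : ℝ) ∈ J}, Iic (q : ℝ)
  have hAU : A ⊆ U := fun x hx =>
    let ⟨q, hxq, hq⟩ := hJ x (hA hx)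
    mem_iUnion.2 ⟨⟨q, hq⟩, hxq⟩
  have hU : ρ.restrict U = ν.restrict U := Measure.restrict_iUnion_congr.2 fun q => h q q.2
  rw [← Measure.restrict_eq_self ρ hAU, hU, Measure.restrict_eq_self ν hAU]

theorem apply_eq_setLIntegral_of_restrict_eq {α : Type*} [MeasurableSpace α] {ρ ν : Measure α}
    {g : α → ℝ≥0∞} {S A : Set α} (h : ρ.restrict S = (ν.withDensity g).restrict S)
    (hA : MeasurableSet A) (hAS : A ⊆ S) : ρ A = ∫⁻ u in A, g u ∂ν := by
  rw [← Measure.restrict_eq_self ρ hAS, h, Measure.restrict_eq_self _ hAS, withDensity_apply _ hA]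

theorem restrict_Ioc_eq_withDensity_div_of_hazard_eq {ρ ν : Measure ℝ} [IsFiniteMeasure ρ]
    {q₁ q₂ : ℝ → ℝ≥0∞} (hq₁ : Measurable q₁) (hq₂ : Measurable q₂) {a t : ℝ} {ε : ℝ≥0∞}
    (hε : ε ≠ 0) (hq₁ε : ∀ u ∈ Ioc a t, ε ≤ q₁ u) (hq₁top : ∀ u ∈ Ioc a t, q₁ u ≠ ∞)
    (h : ∀ r ∈ Icc a t, ∫⁻ u in Ioc a r, (q₁ u)⁻¹ ∂ρ = ∫⁻ u in Ioc a r, (q₂ u)⁻¹ ∂ν) :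
    ρ.restrict (Ioc a t) = (ν.withDensity fun u => q₁ u / q₂ u).restrict (Ioc a t) := by
  have : IsFiniteMeasure ((ρ.restrict (Ioc a t)).withDensity fun u => (q₁ u)⁻¹) := by
    refine isFiniteMeasure_withDensity (ne_top_of_le_ne_top
      (ENNReal.mul_ne_top (ENNReal.inv_ne_top.2 hε) (measure_ne_top ρ (Ioc a t))) ?_)
    calc ∫⁻ u in Ioc a t, (q₁ u)⁻¹ ∂ρ ≤ ∫⁻ _ in Ioc a t, ε⁻¹ ∂ρ :=
          setLIntegral_mono' measurableSet_Ioc fun u hu => ENNReal.inv_le_inv.2 (hq₁ε u hu)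
      _ = ε⁻¹ * ρ (Ioc a t) := setLIntegral_const _ _
  have hhazard : (ρ.restrict (Ioc a t)).withDensity (fun u => (q₁ u)⁻¹)
      = (ν.restrict (Ioc a t)).withDensity fun u => (q₂ u)⁻¹ := by
    refine Measure.ext_of_Iic _ _ fun r => ?_
    rw [withDensity_apply _ measurableSet_Iic, withDensity_apply _ measurableSet_Iic,
      Measure.restrict_restrict measurableSet_Iic, Measure.restrict_restrict measurableSet_Iic,
      inter_comm, Ioc_inter_Iic]
    rcases le_or_gt a (min t r) with har | har
    · exact h _ ⟨har, min_le_left t r⟩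
    · simp [Ioc_eq_empty_of_le har.le]
  have hinv := withDensity_inv_same (μ := ρ.restrict (Ioc a t)) (f := fun u => (q₁ u)⁻¹) hq₁.inv
    (ae_restrict_of_forall_mem measurableSet_Ioc fun u hu => ENNReal.inv_ne_zero.2 (hq₁top u hu))
    (ae_restrict_of_forall_mem measurableSet_Ioc fun u hu =>
      ENNReal.inv_ne_top.2 (hε.bot_lt.trans_le (hq₁ε u hu)).ne')
  simp only [inv_inv] at hinv
  rw [← hinv, hhazard, ← withDensity_mul (f := fun u => (q₂ u)⁻¹) _ hq₂.inv hq₁,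
    restrict_withDensity measurableSet_Ioc]
  exact congrArg _ (funext fun u => mul_comm (q₂ u)⁻¹ (q₁ u))

section Survival

variable {Ω : Type*} [MeasurableSpace Ω]

theorem antitone_measure_setOf_le (P : Measure Ω) (X : Ω → ℝ) :
    Antitone fun s => P {ω | s ≤ X ω} :=
  fun _ _ hst => measure_mono fun _ h => hst.trans h

theorem antitone_measure_setOf_lt (P : Measure Ω) (X : Ω → ℝ) :
    Antitone fun s => P {ω | s < X ω} :=
  fun _ _ hst => measure_mono fun _ h => hst.trans_lt h

variable {P : Measure Ω}

theorem exists_rat_gt_measure_pos {X : Ω → ℝ} {x : ℝ} (h : 0 < P {ω | x < X ω}) :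
    ∃ q : ℚ, x < q ∧ 0 < P {ω | (q : ℝ) < X ω} := by
  by_contra! hq
  refine h.ne' (measure_mono_null (t := ⋃ q : {q : ℚ // x < q}, {ω | (q : ℝ) < X ω})
    (fun ω hω => ?_) (measure_iUnion_null fun q => nonpos_iff_eq_zero.1 (hq q q.2)))
  obtain ⟨q, hxq, hqX⟩ := exists_rat_btwn (show x < X ω from hω)
  exact mem_iUnion.2 ⟨⟨q, hxq⟩, hqX⟩

theorem map_eq_sum_map_restrict {X : Ω → ℝ} {N : Ω → ℕ} (hX : Measurable X) (hN : Measurable N)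
    {J : Finset ℕ} (hNJ : ∀ ω, N ω ∈ J) :
    P.map X = ∑ j ∈ J, (P.restrict {ω | N ω = j}).map X := by
  ext A hA
  have hJ : N ⁻¹' J = univ := eq_univ_of_forall hNJ
  rw [Measure.finsetSum_apply, Measure.map_apply hX hA, ← Measure.restrict_apply_univ, ← hJ,
    ← sum_measure_preimage_singleton J fun j _ => hN (measurableSet_singleton j)]
  refine Finset.sum_congr rfl fun j _ => ?_
  rw [Measure.map_apply hX hA, Measure.restrict_apply (hX hA),
    Measure.restrict_apply (hN (measurableSet_singleton j)), inter_comm]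
  rfl

theorem setLIntegral_map_eq_sum {X : Ω → ℝ} {N : Ω → ℕ} (hX : Measurable X) (hN : Measurable N)
    {J : Finset ℕ} (hNJ : ∀ ω, N ω ∈ J) (g : ℝ → ℝ≥0∞) {A : Set ℝ} (hA : MeasurableSet A) :
    ∫⁻ u in A, g u ∂P.map X = ∑ j ∈ J, ∫⁻ u in A, g u ∂(P.restrict {ω | N ω = j}).map X := by
  simp_rw [← lintegral_indicator hA]
  rw [map_eq_sum_map_restrict hX hN hNJ, lintegral_finsetSum_measure]

theorem map_restrict_Iic_zero {X : Ω → ℝ} (hX : Measurable X) (hX0 : ∀ᵐ ω ∂P, 0 < X ω)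
    (E : Set Ω) : (P.restrict E).map X (Iic 0) = 0 := by
  have hnull : P {ω | X ω ≤ 0} = 0 := by simpa only [not_lt] using ae_iff.1 hX0
  rw [Measure.map_apply hX measurableSet_Iic]
  exact nonpos_iff_eq_zero.1 ((Measure.restrict_le_self _).trans_eq hnull)

theorem measure_setOf_le_add_map_Ioo [IsProbabilityMeasure P] {X : Ω → ℝ} (hX : Measurable X)
    (hX0 : ∀ᵐ ω ∂P, 0 < X ω) (s : ℝ) : P {ω | s ≤ X ω} + P.map X (Ioo 0 s) = 1 := by
  have hdisj : Disjoint {ω | s ≤ X ω} (X ⁻¹' Ioo 0 s) := disjoint_left.2 fun ω h h' => h'.2.not_ge h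
  rw [Measure.map_apply hX measurableSet_Ioo, ← measure_union hdisj (hX measurableSet_Ioo),
    ← measure_univ (μ := P)]
  have hnull : P {ω | ¬ 0 < X ω} = 0 := ae_iff.1 hX0
  refine measure_congr (ae_eq_univ.2 (measure_mono_null (fun ω hω => ?_) hnull))
  simp only [mem_compl_iff, mem_union, mem_ofPred_eq, mem_preimage, mem_Ioo, not_or] at hω ⊢
  exact fun h0 => hω.2 ⟨h0, not_le.1 hω.1⟩

theorem measure_Ico_eq_survival_mul_add [IsFiniteMeasure P] {T : Ω → ℝ} (hT : Measurable T)
    (m : Measure ℝ) [SFinite m] {a s : ℝ} (hs : 0 < P {ω | s ≤ T ω}) :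
    m (Ico a s) = P {ω | s ≤ T ω} * ∫⁻ v in Ico a s, (P {ω | v < T ω})⁻¹ ∂m
      + ∫⁻ u in Ioo a s, ∫⁻ v in Ico a u, (P {ω | v < T ω})⁻¹ ∂m ∂P.map T := by
  have hg : Measurable fun v => (P {ω | v < T ω})⁻¹ :=
    (antitone_measure_setOf_lt P T).measurable.inv
  have hsplit : ∀ v < s, P.map T (Ioo v s) + P {ω | s ≤ T ω} = P {ω | v < T ω} := fun v hv => by
    have hdisj : Disjoint (T ⁻¹' Ioo v s) (T ⁻¹' Ici s) :=
      disjoint_left.2 fun ω h h' => h.2.not_ge h'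
    change P.map T (Ioo v s) + P (T ⁻¹' Ici s) = P (T ⁻¹' Ioi v)
    rw [Measure.map_apply hT measurableSet_Ioo, ← measure_union hdisj (hT measurableSet_Ici),
      ← preimage_union, Ioo_union_Ici_eq_Ioi hv]
  calc m (Ico a s)
      = ∫⁻ v in Ico a s, (P.map T (Ioo v s) + P {ω | s ≤ T ω}) * (P {ω | v < T ω})⁻¹ ∂m := by
        rw [← setLIntegral_one]
        refine setLIntegral_congr_fun measurableSet_Ico fun v hv => ?_
        rw [hsplit v hv.2, ENNReal.mul_inv_cancel (a := P {ω | v < T ω})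
          (hs.trans_le (measure_mono fun ω h => hv.2.trans_le h)).ne' (measure_ne_top _ _)]
    _ = ∫⁻ v in Ico a s, P.map T (Ioo v s) * (P {ω | v < T ω})⁻¹ ∂m
        + P {ω | s ≤ T ω} * ∫⁻ v in Ico a s, (P {ω | v < T ω})⁻¹ ∂m := by
        simp_rw [add_mul]
        rw [lintegral_add_right _ (hg.const_mul _), lintegral_const_mul _ hg]
    _ = _ := by rw [setLIntegral_measure_Ioo_mul_eq hg, add_comm]

theorem measure_lt_le_measure_le_of_ae_le {X Y : Ω → ℝ} (hXY : ∀ᵐ ω ∂P, X ω ≤ Y ω) {s t : ℝ}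
    (hst : s ≤ t) : P {ω | t < X ω} ≤ P {ω | s ≤ Y ω} :=
  measure_mono_ae (hXY.mono fun _ hω h => hst.trans (h.le.trans hω))

end Survival

section CompetingRisks

variable {Ω : Type*} [MeasurableSpace Ω]

-- The function `B` of the constant-sum property.
noncomputable def censoringWeight (P : Measure Ω) (T Tt : Ω → ℝ) (Dt : Ω → ℕ) (s : ℝ) : ℝ≥0∞ :=
  ∫⁻ u in Ico 0 s, (P {ω | u < T ω})⁻¹ ∂(P.restrict {ω | Dt ω = 0}).map Tt

theorem monotone_censoringWeight (P : Measure Ω) (T Tt : Ω → ℝ) (Dt : Ω → ℕ) :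
    Monotone (censoringWeight P T Tt Dt) :=
  fun _ _ hst => lintegral_mono_set (Ico_subset_Ico_right hst)

variable {P : Measure Ω} [IsProbabilityMeasure P]
  {T Tt : Ω → ℝ} {D Dt : Ω → ℕ} {d : ℕ}

theorem censoringWeight_le_inv (hTt : Measurable Tt) (hTtT : ∀ᵐ ω ∂P, Tt ω ≤ T ω) {t u : ℝ}
    (hut : u ≤ t) : censoringWeight P T Tt Dt u ≤ (P {ω | t < Tt ω})⁻¹ := calc
  censoringWeight P T Tt Dt u
      ≤ ∫⁻ _ in Ico 0 u, (P {ω | t < Tt ω})⁻¹ ∂(P.restrict {ω | Dt ω = 0}).map Tt :=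
    setLIntegral_mono' measurableSet_Ico fun v hv => ENNReal.inv_le_inv.2 <| measure_mono_ae <|
      hTtT.mono fun ω hω h => (hv.2.trans_le hut).trans (lt_of_lt_of_le h hω)
  _ = (P {ω | t < Tt ω})⁻¹ * (P.restrict {ω | Dt ω = 0}).map Tt (Ico 0 u) := setLIntegral_const _ _
  _ ≤ (P {ω | t < Tt ω})⁻¹ := by
    refine mul_le_of_le_one_right' ?_
    rw [Measure.map_apply hTt measurableSet_Ico]
    exact (Measure.restrict_le_self _).trans prob_le_one

theorem survival_add_censoringWeight_add_sum_eq_one (hT : Measurable T) (hTt : Measurable Tt)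
    (hDt : Measurable Dt) (hTt0 : ∀ᵐ ω ∂P, 0 < Tt ω) (hDtrange : ∀ ω, Dt ω ≤ d) {s : ℝ}
    (hs : 0 < P {ω | s ≤ T ω}) :
    P {ω | s ≤ Tt ω} + P {ω | s ≤ T ω} * censoringWeight P T Tt Dt s
      + ∫⁻ u in Ioo 0 s, censoringWeight P T Tt Dt u ∂P.map T
      + ∑ j ∈ Finset.Icc 1 d, (P.restrict {ω | Dt ω = j}).map Tt (Ioo 0 s) = 1 := by
  have hDtJ : ∀ ω, Dt ω ∈ insert 0 (Finset.Icc 1 d) := fun ω => by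
    simp only [Finset.mem_insert, Finset.mem_Icc]
    have := hDtrange ω
    omega
  rw [← measure_setOf_le_add_map_Ioo hTt hTt0 s, map_eq_sum_map_restrict hTt hDt hDtJ,
    Measure.finsetSum_apply, Finset.sum_insert (by simp),
    ← measure_Ico_eq_measure_Ioo (map_restrict_Iic_zero hTt hTt0 _),
    measure_Ico_eq_survival_mul_add hT _ hs]
  simp only [censoringWeight, add_assoc]

theorem survival_add_setLIntegral_eq_one (hT : Measurable T) (hTt : Measurable Tt)
    (hD : Measurable D) (hDt : Measurable Dt) (hpos : ∀ᵐ ω ∂P, 0 < Tt ω ∧ Tt ω ≤ T ω)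
    (hDrange : ∀ ω, 1 ≤ D ω ∧ D ω ≤ d) (hDtrange : ∀ ω, Dt ω ≤ d) {G : ℝ → ℝ≥0∞} {t : ℝ}
    (ht : 0 < P {ω | t < Tt ω})
    (hdens : ∀ j ∈ Finset.Icc 1 d, ((P.restrict {ω | Dt ω = j}).map Tt).restrict (Ioc 0 t)
      = (((P.restrict {ω | D ω = j}).map T).withDensity G).restrict (Ioc 0 t))
    {s : ℝ} (hs : s ∈ Ioc 0 t) :
    P {ω | s ≤ Tt ω} + P {ω | s ≤ T ω} * censoringWeight P T Tt Dt s
      + ∫⁻ u in Ioo 0 s, (censoringWeight P T Tt Dt u + G u) ∂P.map T = 1 := by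
  have hDJ : ∀ ω, D ω ∈ Finset.Icc 1 d := fun ω => Finset.mem_Icc.2 (hDrange ω)
  have hsum : ∀ j ∈ Finset.Icc 1 d, (P.restrict {ω | Dt ω = j}).map Tt (Ioo 0 s)
      = ∫⁻ u in Ioo 0 s, G u ∂(P.restrict {ω | D ω = j}).map T := fun j hj =>
    apply_eq_setLIntegral_of_restrict_eq (hdens j hj) measurableSet_Ioo
      (Ioo_subset_Ioc_self.trans (Ioc_subset_Ioc_right hs.2))
  rw [lintegral_add_left (monotone_censoringWeight P T Tt Dt).measurable,
    setLIntegral_map_eq_sum hT hD hDJ G measurableSet_Ioo, ← Finset.sum_congr rfl hsum, ← add_assoc]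
  exact survival_add_censoringWeight_add_sum_eq_one hT hTt hDt (hpos.mono fun _ h => h.1) hDtrange
    (ht.trans_le (measure_lt_le_measure_le_of_ae_le (hpos.mono fun _ h => h.2) hs.2))

theorem survival_eq_of_restrict_eq_withDensity_div (hT : Measurable T) (hTt : Measurable Tt)
    (hD : Measurable D) (hDt : Measurable Dt) (hpos : ∀ᵐ ω ∂P, 0 < Tt ω ∧ Tt ω ≤ T ω)
    (hDrange : ∀ ω, 1 ≤ D ω ∧ D ω ≤ d) (hDtrange : ∀ ω, Dt ω ≤ d) {t : ℝ}
    (ht : 0 < P {ω | t < Tt ω})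
    (hdens : ∀ j ∈ Finset.Icc 1 d, ((P.restrict {ω | Dt ω = j}).map Tt).restrict (Ioc 0 t)
      = (((P.restrict {ω | D ω = j}).map T).withDensity
          fun u => P {ω | u ≤ Tt ω} / P {ω | u ≤ T ω}).restrict (Ioc 0 t)) :
    ∀ s ∈ Ioc 0 t,
      P {ω | s ≤ T ω} = P {ω | s ≤ Tt ω} + P {ω | s ≤ T ω} * censoringWeight P T Tt Dt s := by
  set ε := P {ω | t < Tt ω}
  set S := fun u => P {ω | u ≤ T ω}
  set B := censoringWeight P T Tt Dt
  have hTtT : ∀ᵐ ω ∂P, Tt ω ≤ T ω := hpos.mono fun _ h => h.2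
  have hεS : ∀ u ∈ Ioc 0 t, ε ≤ S u := fun u hu => measure_lt_le_measure_le_of_ae_le hTtT hu.2
  have hSmeas : Measurable S := (antitone_measure_setOf_le P T).measurable
  have hpmeas : Measurable fun u => P {ω | u ≤ Tt ω} + S u * B u :=
    (antitone_measure_setOf_le P Tt).measurable.add
      (hSmeas.mul (monotone_censoringWeight P T Tt Dt).measurable)
  set κ := ((P.map T).withDensity fun u => (S u)⁻¹).restrict (Ioc 0 t)
  have : IsFiniteMeasure κ := isFiniteMeasure_restrict.2 <| by
    rw [withDensity_apply _ measurableSet_Ioc]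
    refine ne_top_of_le_ne_top (ENNReal.mul_ne_top (ENNReal.inv_ne_top.2 ht.ne')
      (measure_ne_top (P.map T) (Ioc 0 t))) ?_
    calc ∫⁻ u in Ioc 0 t, (S u)⁻¹ ∂P.map T ≤ ∫⁻ _ in Ioc 0 t, ε⁻¹ ∂P.map T :=
          setLIntegral_mono' measurableSet_Ioc fun u hu => ENNReal.inv_le_inv.2 (hεS u hu)
      _ = ε⁻¹ * P.map T (Ioc 0 t) := setLIntegral_const _ _
  have hκ : ∀ s ∈ Ioc 0 t, ∀ f : ℝ → ℝ≥0∞, Measurable f →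
      ∫⁻ u in Ioo 0 s, f u ∂κ = ∫⁻ u in Ioo 0 s, (S u)⁻¹ * f u ∂P.map T := fun s hs f hf => by
    rw [Measure.restrict_restrict_of_subset (Ioo_subset_Ioc_self.trans (Ioc_subset_Ioc_right hs.2)),
      setLIntegral_withDensity_eq_setLIntegral_mul _ (f := fun u => (S u)⁻¹) hSmeas.inv hf
        measurableSet_Ioo]
    rfl
  refine eqOn_of_add_setLIntegral_eq (κ := κ) hSmeas hpmeas (C := 1 + ε⁻¹)
    (ENNReal.add_ne_top.2 ⟨ENNReal.one_ne_top, ENNReal.inv_ne_top.2 ht.ne'⟩)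
    (fun s _ => prob_le_one.trans le_self_add)
    (fun s hs => add_le_add prob_le_one ((mul_le_of_le_one_left' prob_le_one).trans
      (censoringWeight_le_inv hTt hTtT hs.2))) fun s hs => ?_
  have hS0 : ∀ u ∈ Ioo 0 s, S u ≠ 0 := fun u hu =>
    (ht.trans_le (hεS u ⟨hu.1, hu.2.le.trans hs.2⟩)).ne'
  have hS1 : S s + P.map T (Ioo 0 s) = 1 :=
    measure_setOf_le_add_map_Ioo hT (hpos.mono fun _ h => h.1.trans_le h.2) s
  have hone : P {ω | s ≤ Tt ω} + S s * B s
      + ∫⁻ u in Ioo 0 s, (B u + P {ω | u ≤ Tt ω} / S u) ∂P.map T = 1 :=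
    survival_add_setLIntegral_eq_one hT hTt hD hDt hpos hDrange hDtrange ht hdens hs
  rw [hκ s hs _ hSmeas, hκ s hs _ hpmeas, setLIntegral_congr_fun measurableSet_Ioo
      fun u hu => ENNReal.inv_mul_cancel (hS0 u hu) (measure_ne_top _ _),
    setLIntegral_one, setLIntegral_congr_fun measurableSet_Ioo fun u hu => by
      rw [mul_add, ← mul_assoc, ENNReal.inv_mul_cancel (hS0 u hu) (measure_ne_top _ _), one_mul,
        ← ENNReal.div_eq_inv_mul, add_comm],
    hS1, hone]

theorem survival_eq_of_restrict_eq_withDensity_one_sub (hT : Measurable T) (hTt : Measurable Tt)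
    (hD : Measurable D) (hDt : Measurable Dt) (hpos : ∀ᵐ ω ∂P, 0 < Tt ω ∧ Tt ω ≤ T ω)
    (hDrange : ∀ ω, 1 ≤ D ω ∧ D ω ≤ d) (hDtrange : ∀ ω, Dt ω ≤ d) {t : ℝ}
    (ht : 0 < P {ω | t < Tt ω})
    (hdens : ∀ j ∈ Finset.Icc 1 d, ((P.restrict {ω | Dt ω = j}).map Tt).restrict (Ioc 0 t)
      = (((P.restrict {ω | D ω = j}).map T).withDensity
          fun u => 1 - censoringWeight P T Tt Dt u).restrict (Ioc 0 t)) :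
    ∀ s ∈ Ioc 0 t,
      P {ω | s ≤ T ω} = P {ω | s ≤ Tt ω} + P {ω | s ≤ T ω} * censoringWeight P T Tt Dt s := by
  set B := censoringWeight P T Tt Dt
  have hone : ∀ s ∈ Ioc 0 t, P {ω | s ≤ Tt ω} + P {ω | s ≤ T ω} * B s
      + ∫⁻ u in Ioo 0 s, (B u + (1 - B u)) ∂P.map T = 1 := fun s hs =>
    survival_add_setLIntegral_eq_one hT hTt hD hDt hpos hDrange hDtrange ht hdens hs
  have hS1 : ∀ s, P {ω | s ≤ T ω} + P.map T (Ioo 0 s) = 1 :=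
    measure_setOf_le_add_map_Ioo hT (hpos.mono fun _ h => h.1.trans_le h.2)
  have hB1 : ∀ s ∈ Ioc 0 t, B s ≤ 1 := by
    intro s hs
    have hint : P.map T (Ioo 0 s) ≤ ∫⁻ u in Ioo 0 s, (B u + (1 - B u)) ∂P.map T := by
      rw [← setLIntegral_one]
      exact setLIntegral_mono' measurableSet_Ioo fun u _ => le_add_tsub
    have hle : P {ω | s ≤ Tt ω} + P {ω | s ≤ T ω} * B s + P.map T (Ioo 0 s)
        ≤ P {ω | s ≤ T ω} + P.map T (Ioo 0 s) := by
      rw [hS1 s, ← hone s hs]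
      gcongr
    have hS0 : P {ω | s ≤ T ω} ≠ 0 :=
      (ht.trans_le (measure_lt_le_measure_le_of_ae_le (hpos.mono fun _ h => h.2) hs.2)).ne'
    rw [← ENNReal.mul_le_mul_iff_right hS0 (measure_ne_top _ _), mul_one]
    exact le_add_self.trans (ENNReal.le_of_add_le_add_right (measure_ne_top _ _) hle)
  intro s hs
  have hint : ∫⁻ u in Ioo 0 s, (B u + (1 - B u)) ∂P.map T = P.map T (Ioo 0 s) := by
    rw [← setLIntegral_one]
    exact setLIntegral_congr_fun measurableSet_Ioo fun u hu =>
      add_tsub_cancel_of_le (hB1 u ⟨hu.1, hu.2.le.trans hs.2⟩)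
  have h := hone s hs
  rw [hint, ← hS1 s] at h
  exact ((ENNReal.add_left_inj (measure_ne_top _ _)).1 h).symm

theorem constantSum_of_hazard_eq (hT : Measurable T) (hTt : Measurable Tt)
    (hD : Measurable D) (hDt : Measurable Dt) (hpos : ∀ᵐ ω ∂P, 0 < Tt ω ∧ Tt ω ≤ T ω)
    (hDrange : ∀ ω, 1 ≤ D ω ∧ D ω ≤ d) (hDtrange : ∀ ω, Dt ω ≤ d)
    (hazard_eq : ∀ j, 1 ≤ j → j ≤ d → ∀ t ∈ {t : ℝ | 0 ≤ t ∧ 0 < P {ω | t < Tt ω}},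
      ∫⁻ s in Ioc 0 t, (P {ω | s ≤ Tt ω})⁻¹ ∂(P.restrict {ω | Dt ω = j}).map Tt
        = ∫⁻ s in Ioc 0 t, (P {ω | s ≤ T ω})⁻¹ ∂(P.restrict {ω | D ω = j}).map T) :
    ∀ j, 1 ≤ j → j ≤ d → ∀ A : Set ℝ, MeasurableSet A →
      A ⊆ {t : ℝ | 0 ≤ t ∧ 0 < P {ω | t < Tt ω}} →
      (P.restrict {ω | Dt ω = j}).map Tt A
        = ∫⁻ s in A, (1 - censoringWeight P T Tt Dt s) ∂(P.restrict {ω | D ω = j}).map T := by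
  have hTtT : ∀ᵐ ω ∂P, Tt ω ≤ T ω := hpos.mono fun _ h => h.2
  have hdens : ∀ t ∈ {t : ℝ | 0 ≤ t ∧ 0 < P {ω | t < Tt ω}}, ∀ j ∈ Finset.Icc 1 d,
      ((P.restrict {ω | Dt ω = j}).map Tt).restrict (Ioc 0 t)
        = (((P.restrict {ω | D ω = j}).map T).withDensity
            fun u => P {ω | u ≤ Tt ω} / P {ω | u ≤ T ω}).restrict (Ioc 0 t) := fun t ht j hj =>
    restrict_Ioc_eq_withDensity_div_of_hazard_eq (antitone_measure_setOf_le P Tt).measurable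
      (antitone_measure_setOf_le P T).measurable ht.2.ne'
      (fun u hu => measure_lt_le_measure_le_of_ae_le (ae_of_all _ fun _ => le_rfl) hu.2)
      (fun u _ => measure_ne_top _ _) fun r hr => hazard_eq j (Finset.mem_Icc.1 hj).1
        (Finset.mem_Icc.1 hj).2 r ⟨hr.1, ht.2.trans_le (antitone_measure_setOf_lt P Tt hr.2)⟩
  intro j hj1 hjd A hA hAJ
  rw [← withDensity_apply _ hA]
  refine measure_eq_of_forall_restrict_Iic_eq (fun x hx => ?_) (fun t ht => ?_) hAJ
  · obtain ⟨q, hxq, hq⟩ := exists_rat_gt_measure_pos hx.2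
    exact ⟨q, hxq.le, hx.1.trans hxq.le, hq⟩
  have hK := survival_eq_of_restrict_eq_withDensity_div hT hTt hD hDt hpos hDrange hDtrange ht.2
    (hdens t ht)
  rw [restrict_Iic_eq_restrict_Ioc (map_restrict_Iic_zero hTt (hpos.mono fun _ h => h.1) _),
    restrict_Iic_eq_restrict_Ioc (withDensity_absolutelyContinuous _ _
      (map_restrict_Iic_zero hT (hpos.mono fun _ h => h.1.trans_le h.2) _)),
    hdens t ht j (Finset.mem_Icc.2 ⟨hj1, hjd⟩), restrict_withDensity measurableSet_Ioc,
    restrict_withDensity measurableSet_Ioc]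
  refine withDensity_congr_ae (ae_restrict_of_forall_mem measurableSet_Ioc fun u hu => ?_)
  exact (ENNReal.one_sub_eq_div_of_eq_add_mul (hK u hu)
    (ht.2.trans_le (measure_lt_le_measure_le_of_ae_le hTtT hu.2)).ne' (measure_ne_top _ _)
    ((censoringWeight_le_inv hTt hTtT hu.2).trans_lt (ENNReal.inv_lt_top.2 ht.2)).ne).symm

theorem hazard_eq_of_constantSum (hT : Measurable T) (hTt : Measurable Tt)
    (hD : Measurable D) (hDt : Measurable Dt) (hpos : ∀ᵐ ω ∂P, 0 < Tt ω ∧ Tt ω ≤ T ω)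
    (hDrange : ∀ ω, 1 ≤ D ω ∧ D ω ≤ d) (hDtrange : ∀ ω, Dt ω ≤ d)
    (constantSum : ∀ j, 1 ≤ j → j ≤ d → ∀ A : Set ℝ, MeasurableSet A →
      A ⊆ {t : ℝ | 0 ≤ t ∧ 0 < P {ω | t < Tt ω}} →
      (P.restrict {ω | Dt ω = j}).map Tt A
        = ∫⁻ s in A, (1 - censoringWeight P T Tt Dt s) ∂(P.restrict {ω | D ω = j}).map T) :
    ∀ j, 1 ≤ j → j ≤ d → ∀ t ∈ {t : ℝ | 0 ≤ t ∧ 0 < P {ω | t < Tt ω}},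
      ∫⁻ s in Ioc 0 t, (P {ω | s ≤ Tt ω})⁻¹ ∂(P.restrict {ω | Dt ω = j}).map Tt
        = ∫⁻ s in Ioc 0 t, (P {ω | s ≤ T ω})⁻¹ ∂(P.restrict {ω | D ω = j}).map T := by
  intro j hj1 hjd t ht
  have hTtT : ∀ᵐ ω ∂P, Tt ω ≤ T ω := hpos.mono fun _ h => h.2
  have hdens : ∀ j ∈ Finset.Icc 1 d, ((P.restrict {ω | Dt ω = j}).map Tt).restrict (Ioc 0 t)
      = (((P.restrict {ω | D ω = j}).map T).withDensity
          fun u => 1 - censoringWeight P T Tt Dt u).restrict (Ioc 0 t) := fun j hj =>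
    Measure.ext fun A hA => by
      rw [Measure.restrict_apply hA, Measure.restrict_apply hA,
        withDensity_apply _ (hA.inter measurableSet_Ioc)]
      exact constantSum j (Finset.mem_Icc.1 hj).1 (Finset.mem_Icc.1 hj).2 _
        (hA.inter measurableSet_Ioc) fun u hu =>
          ⟨hu.2.1.le, ht.2.trans_le (antitone_measure_setOf_lt P Tt hu.2.2)⟩
  have hK := survival_eq_of_restrict_eq_withDensity_one_sub hT hTt hD hDt hpos hDrange hDtrange
    ht.2 hdens
  rw [hdens j (Finset.mem_Icc.2 ⟨hj1, hjd⟩), setLIntegral_withDensity_eq_setLIntegral_mul _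
    (f := fun u => 1 - censoringWeight P T Tt Dt u) (g := fun u => (P {ω | u ≤ Tt ω})⁻¹)
    (measurable_const.sub (monotone_censoringWeight P T Tt Dt).measurable)
    (antitone_measure_setOf_le P Tt).measurable.inv measurableSet_Ioc]
  refine setLIntegral_congr_fun measurableSet_Ioc fun u hu => ?_
  have hεle : P {ω | t < Tt ω} ≤ P {ω | u ≤ Tt ω} :=
    measure_lt_le_measure_le_of_ae_le (ae_of_all _ fun _ => le_rfl) hu.2
  simp only [Pi.mul_apply]
  rw [ENNReal.one_sub_eq_div_of_eq_add_mul (hK u hu)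
      (ht.2.trans_le (measure_lt_le_measure_le_of_ae_le hTtT hu.2)).ne'
      (measure_ne_top _ _)
      ((censoringWeight_le_inv hTt hTtT hu.2).trans_lt (ENNReal.inv_lt_top.2 ht.2)).ne,
    ENNReal.div_eq_inv_mul, mul_assoc,
    ENNReal.mul_inv_cancel (ht.2.trans_le hεle).ne' (measure_ne_top _ _), mul_one]

end CompetingRisks

theorem identity_of_forces_iff_constant_sum_general
    {Ω : Type*} [m0 : MeasurableSpace Ω] (P : Measure Ω) [IsProbabilityMeasure P]
    (d : ℕ)
    (T Tt : Ω → ℝ) (D Dt : Ω → ℕ)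
    (hT : Measurable T) (hTt : Measurable Tt)
    (hD : Measurable D) (hDt : Measurable Dt)
    (hpos : ∀ᵐ ω ∂P, 0 < Tt ω ∧ Tt ω ≤ T ω)
    (hDrange : ∀ ω, 1 ≤ D ω ∧ D ω ≤ d)
    (hDtrange : ∀ ω, Dt ω ≤ d)
    (μ μt : ℕ → Measure ℝ)
    (hμ : ∀ j, μ j = Measure.map T (P.restrict {ω | D ω = j}))
    (hμt : ∀ j, μt j = Measure.map Tt (P.restrict {ω | Dt ω = j}))
    (H Ht : ℕ → ℝ → ℝ≥0∞)
    (hH : ∀ j t, H j t = ∫⁻ s in Ioc 0 t, (P {ω | s ≤ T ω})⁻¹ ∂(μ j))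
    (hHt : ∀ j t, Ht j t = ∫⁻ s in Ioc 0 t, (P {ω | s ≤ Tt ω})⁻¹ ∂(μt j))
    (𝒥 : Set ℝ) (h𝒥 : 𝒥 = {t | 0 ≤ t ∧ 0 < P {ω | t < Tt ω}})
    -- B(s) = ∫_{[0,s)} S(u)⁻¹ μ̃₀(du)
    (B : ℝ → ℝ≥0∞)
    (hB : ∀ s, B s = ∫⁻ u in Ico 0 s, (P {ω | u < T ω})⁻¹ ∂(μt 0)) :
    -- (i) identity of forces of mortality
    (∀ j, 1 ≤ j → j ≤ d → ∀ t ∈ 𝒥, Ht j t = H j t) ↔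
    -- (ii) the constant-sum property:
    -- μ̃_j(A) = ∫_A (1 − B(s)) μ_j(ds) for all Borel A ⊆ 𝒥
    (∀ j, 1 ≤ j → j ≤ d → ∀ A : Set ℝ, MeasurableSet A → A ⊆ 𝒥 →
      μt j A = ∫⁻ s in A, (1 - B s) ∂(μ j)) := by
  obtain rfl : μ = fun j => Measure.map T (P.restrict {ω | D ω = j}) := funext hμ
  obtain rfl : μt = fun j => Measure.map Tt (P.restrict {ω | Dt ω = j}) := funext hμt
  obtain rfl : B = censoringWeight P T Tt Dt := funext hB
  subst h𝒥
  simp only [hH, hHt]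
  exact ⟨constantSum_of_hazard_eq hT hTt hD hDt hpos hDrange hDtrange,
    hazard_eq_of_constantSum hT hTt hD hDt hpos hDrange hDtrange⟩

/-- Proposition 2 (parts (2.1) ⟺ (2.4)): identity of forces of mortality is equivalent
to the constant-sum property (in integrated form). -/
theorem identity_of_forces_iff_constant_sum
    {Ω : Type*} [m0 : MeasurableSpace Ω] (P : Measure Ω) [IsProbabilityMeasure P]
    (d : ℕ) (hd : 1 ≤ d)
    (T Tt : Ω → ℝ) (D Dt : Ω → ℕ)
    (hT : Measurable T) (hTt : Measurable Tt)
    (hD : Measurable D) (hDt : Measurable Dt)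
    (hpos : ∀ᵐ ω ∂P, 0 < Tt ω ∧ Tt ω ≤ T ω)
    (hDrange : ∀ ω, 1 ≤ D ω ∧ D ω ≤ d)
    (hDtrange : ∀ ω, Dt ω ≤ d)
    (hDD : ∀ᵐ ω ∂P, Dt ω = if Tt ω = T ω then D ω else 0)
    (μ μt : ℕ → Measure ℝ)
    (hμ : ∀ j, μ j = Measure.map T (P.restrict {ω | D ω = j}))
    (hμt : ∀ j, μt j = Measure.map Tt (P.restrict {ω | Dt ω = j}))
    (H Ht : ℕ → ℝ → ℝ≥0∞)
    (hH : ∀ j t, H j t = ∫⁻ s in Ioc 0 t, (P {ω | s ≤ T ω})⁻¹ ∂(μ j))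
    (hHt : ∀ j t, Ht j t = ∫⁻ s in Ioc 0 t, (P {ω | s ≤ Tt ω})⁻¹ ∂(μt j))
    (𝒥 : Set ℝ) (h𝒥 : 𝒥 = {t | 0 ≤ t ∧ 0 < P {ω | t < Tt ω}})
    -- B(s) = ∫_{[0,s)} S(u)⁻¹ μ̃₀(du)
    (B : ℝ → ℝ≥0∞)
    (hB : ∀ s, B s = ∫⁻ u in Ico 0 s, (P {ω | u < T ω})⁻¹ ∂(μt 0)) :
    -- (i) identity of forces of mortality
    (∀ j, 1 ≤ j → j ≤ d → ∀ t ∈ 𝒥, Ht j t = H j t) ↔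
    -- (ii) the constant-sum property:
    -- μ̃_j(A) = ∫_A (1 − B(s)) μ_j(ds) for all Borel A ⊆ 𝒥
    (∀ j, 1 ≤ j → j ≤ d → ∀ A : Set ℝ, MeasurableSet A → A ⊆ 𝒥 →
      μt j A = ∫⁻ s in A, (1 - B s) ∂(μ j)) :=
  identity_of_forces_iff_constant_sum_general (m0 := m0) P d T Tt D Dt hT hTt hD hDt hpos hDrange
    hDtrange μ μt hμ hμt H Ht hH hHt 𝒥 h𝒥 B hB
end

section
/- Suppose C : Ω → (0,∞] is a random variable that is independent of the pair (T, D) and satisfies T̃ = T ∧ C a.s. (so that also D̃ = D·1{T ≤ C} a.s.). Then non-prognostic observation holds: P(T ≤ t, D = j | T̃ > s) = P(T ≤ t, D = j | T > s) for all t ≥ 0, all s ∈ 𝒥, and all j = 1,…,d. -/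
open MeasureTheory Set ENNReal ProbabilityTheory

/-- If a censoring time `C` on the same probability space is independent of `(T, D)` and
`T̃ = T ∧ C` a.s., then non-prognostic observation holds. -/
theorem independent_censoring_implies_nonprognostic_observation
    {Ω : Type*} [m0 : MeasurableSpace Ω] (P : Measure Ω) [IsProbabilityMeasure P]
    (d : ℕ) (hd : 1 ≤ d)
    (T Tt : Ω → ℝ) (D Dt : Ω → ℕ)
    (hT : Measurable T) (hTt : Measurable Tt)
    (hD : Measurable D) (hDt : Measurable Dt)
    (hpos : ∀ᵐ ω ∂P, 0 < Tt ω ∧ Tt ω ≤ T ω)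
    (hDrange : ∀ ω, 1 ≤ D ω ∧ D ω ≤ d)
    (hDtrange : ∀ ω, Dt ω ≤ d)
    (hDD : ∀ᵐ ω ∂P, Dt ω = if Tt ω = T ω then D ω else 0)
    (𝒥 : Set ℝ) (h𝒥 : 𝒥 = {t | 0 ≤ t ∧ 0 < P {ω | t < Tt ω}})
    -- the censoring time C : Ω → (0,∞]
    (C : Ω → ℝ≥0∞) (hC : Measurable C) (hCpos : ∀ ω, 0 < C ω)
    (hindep : IndepFun C (fun ω => (T ω, D ω)) P)
    (hmin : ∀ᵐ ω ∂P, Tt ω = (min (ENNReal.ofReal (T ω)) (C ω)).toReal) :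
    -- non-prognostic observation
    ∀ t : ℝ, 0 ≤ t → ∀ s ∈ 𝒥, ∀ j, 1 ≤ j → j ≤ d →
      P {ω | T ω ≤ t ∧ D ω = j ∧ s < Tt ω} / P {ω | s < Tt ω}
        = P {ω | T ω ≤ t ∧ D ω = j ∧ s < T ω} / P {ω | s < T ω} := by

  intro t ht s hs j hj hjd
  rw [h𝒥] at hs
  obtain ⟨hs0, hsP⟩ := hs
  set g : Ω → ℝ × ℕ := fun ω => (T ω, D ω) with hg
  set A : Set Ω := C ⁻¹' Set.Ioi (ENNReal.ofReal s) with hA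
  set B : Set Ω := {ω | s < T ω} with hB
  -- a.e. description of the event {s < Tt}
  have hae : ({ω | s < Tt ω} : Set Ω) =ᵐ[P] ((A ∩ B : Set Ω) : Set Ω) := by
    rw [Filter.eventuallyEq_set]
    filter_upwards [hmin] with ω hω
    have hne : min (ENNReal.ofReal (T ω)) (C ω) ≠ ⊤ :=
      ne_top_of_le_ne_top ENNReal.ofReal_ne_top (min_le_left _ _)
    simp only [Set.mem_setOf_eq, Set.mem_inter_iff, Set.mem_preimage, Set.mem_Ioi, hω, hA, hB]
    rw [← ENNReal.ofReal_lt_iff_lt_toReal hs0 hne, lt_min_iff,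
      ENNReal.ofReal_lt_ofReal_iff_of_nonneg hs0]
    tauto
  -- numerator
  have hnum : P {ω | T ω ≤ t ∧ D ω = j ∧ s < Tt ω}
      = P A * P {ω | T ω ≤ t ∧ D ω = j ∧ s < T ω} := by
    have h1 : {ω | T ω ≤ t ∧ D ω = j ∧ s < Tt ω}
        = {ω | T ω ≤ t ∧ D ω = j} ∩ {ω | s < Tt ω} := by
      ext ω
      simp only [Set.mem_setOf_eq, Set.mem_inter_iff]
      tauto
    have h2 : {ω | T ω ≤ t ∧ D ω = j} ∩ (A ∩ B)
        = A ∩ g ⁻¹' ((Set.Iic t ∩ Set.Ioi s) ×ˢ ({j} : Set ℕ)) := by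
      ext ω
      simp only [Set.mem_inter_iff, Set.mem_setOf_eq, Set.mem_preimage, Set.mem_prod,
        Set.mem_Iic, Set.mem_Ioi, Set.mem_singleton_iff, hg, hA, hB]
      tauto
    have h3 : g ⁻¹' ((Set.Iic t ∩ Set.Ioi s) ×ˢ ({j} : Set ℕ))
        = {ω | T ω ≤ t ∧ D ω = j ∧ s < T ω} := by
      ext ω
      simp only [Set.mem_preimage, Set.mem_prod, Set.mem_Iic, Set.mem_Ioi,
        Set.mem_singleton_iff, Set.mem_setOf_eq, Set.mem_inter_iff, hg]
      tauto
    calc P {ω | T ω ≤ t ∧ D ω = j ∧ s < Tt ω}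
        = P ({ω | T ω ≤ t ∧ D ω = j} ∩ (A ∩ B)) := by
          rw [h1]
          exact measure_congr (MeasureTheory.ae_eq_set_inter (by rfl) hae)
      _ = P (A ∩ g ⁻¹' ((Set.Iic t ∩ Set.Ioi s) ×ˢ ({j} : Set ℕ))) := by rw [h2]
      _ = P A * P (g ⁻¹' ((Set.Iic t ∩ Set.Ioi s) ×ˢ ({j} : Set ℕ))) :=
          hindep.measure_inter_preimage_eq_mul _ _ measurableSet_Ioi
            ((measurableSet_Iic.inter measurableSet_Ioi).prod (measurableSet_singleton j))
      _ = _ := by rw [h3]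
  -- denominator
  have hden : P {ω | s < Tt ω} = P A * P B := by
    have h2 : A ∩ B = A ∩ g ⁻¹' ((Set.Ioi s) ×ˢ (Set.univ : Set ℕ)) := by
      ext ω
      simp [hg, hA, hB]
    calc P {ω | s < Tt ω}
        = P (A ∩ B) := measure_congr hae
      _ = P (A ∩ g ⁻¹' ((Set.Ioi s) ×ˢ (Set.univ : Set ℕ))) := by rw [h2]
      _ = P A * P (g ⁻¹' ((Set.Ioi s) ×ˢ (Set.univ : Set ℕ))) :=
          hindep.measure_inter_preimage_eq_mul _ _ measurableSet_Ioi
            (measurableSet_Ioi.prod MeasurableSet.univ)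
      _ = P A * P B := by
          have h3 : g ⁻¹' ((Set.Ioi s) ×ˢ (Set.univ : Set ℕ)) = B := by
            ext ω
            simp [hg, hB]
          rw [h3]
  have hc0 : P A ≠ 0 := by
    intro h
    rw [hden, h, zero_mul] at hsP
    exact lt_irrefl _ hsP
  have hcT : P A ≠ ⊤ := measure_ne_top _ _
  rw [hnum, hden, ENNReal.mul_div_mul_left _ _ hc0 hcT]
end

section
/- With d = 1 and the pair (T₂, D ≡ 1) as underlying event time and type and (T̃, D̃) as observed exit time and type: (i) identity of forces of mortality holds, that is, ∫_{(0,u]} P(T₂ ≥ s)^{-1} μ(ds) = ∫_{(0,u]} P(T̃ ≥ s)^{-1} μ̃₁(ds) for all u ∈ [0,1), where μ(A) = P(T₂ ∈ A) and μ̃₁(A) = P(T̃ ∈ A, D̃ = 1); but (ii) non-prognostic observation fails: there exist s, u ∈ (0,1) with P(T̃ > s) > 0 and P(T₂ > s) > 0 such that P(T₂ ≤ u | T̃ > s) ≠ P(T₂ ≤ u | T₂ > s). Hence the identifiability property does not imply the representativity property. -/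
open Set MeasureTheory ENNReal

/-- The uniform probability measure on the unit square `[0,1]²`. -/
noncomputable def Punif : Measure (ℝ × ℝ) :=
  (volume.restrict (Icc (0:ℝ) 1)).prod (volume.restrict (Icc (0:ℝ) 1))

/-- The event time `T₂`. -/
noncomputable def exT2 (p : ℝ × ℝ) : ℝ :=
  if 1/2 ≤ p.1 ∧ p.1 ≤ 1 ∧ 0 ≤ p.2 ∧ p.2 < 1/2 then 1 - p.2 else p.1

/-- The observed exit time `T̃(t,c) = min(t,c)`. -/
noncomputable def exTt (p : ℝ × ℝ) : ℝ := min p.1 p.2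

/-- The law of `T₂`: `μ(A) = P(T₂ ∈ A)`. -/
noncomputable def exMu : Measure ℝ := Measure.map exT2 Punif

/-- The observed cause-1 measure `μ̃₁(A) = P(T̃ ∈ A, D̃ = 1)`, where `D̃ = 1{t ≤ c}`. -/
noncomputable def exMut1 : Measure ℝ :=
  Measure.map exTt (Punif.restrict {p : ℝ × ℝ | p.1 ≤ p.2})

/-! If the event time `T` and the censoring time `C` are independent, the sub-distribution of
uncensored exits `min T C` has density `P(C ≥ t)` with respect to the law of `T`, while
`P(min T C ≥ s) = P(T ≥ s) P(C ≥ s)`; the factor `P(C ≥ s)` cancels, so the observed cumulative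
hazard is that of `T`. Here `T = t` and `C = c` are independent uniform times, and `T₂` is uniform
as well, because on `[1/2,1] × [0,1/2)` the value `1 - c` is uniform on `(1/2,1]`; this gives (i).
But `T₂` is not independent of the censoring: for `s = 1/4` and `u = 3/4` the event
`{T₂ > u, T̃ > s}` meets the square in the rectangle `(3/4,1] × [1/2,1]`, whence
`P(T₂ ≤ u | T̃ > s) = 7/9` while `P(T₂ ≤ u | T₂ > s) = 2/3`. -/

section IndependentCensoring

lemma setOf_le_min_eq_prod (s : ℝ) : {p : ℝ × ℝ | s ≤ min p.1 p.2} = Ici s ×ˢ Ici s := by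
  ext; simp only [mem_ofPred_eq, le_min_iff, mem_prod, mem_Ici]

lemma setOf_lt_min_eq_prod (s : ℝ) : {p : ℝ × ℝ | s < min p.1 p.2} = Ioi s ×ˢ Ioi s := by
  ext; simp only [mem_ofPred_eq, lt_min_iff, mem_prod, mem_Ioi]

lemma measurable_measure_Ici (ν : Measure ℝ) : Measurable fun t => ν (Ici t) :=
  Antitone.measurable fun _ _ h => measure_mono (Ici_subset_Ici.mpr h)

variable {μ ν : Measure ℝ}

lemma map_min_restrict_le_eq_withDensity [SFinite μ] [SFinite ν] :
    ((μ.prod ν).restrict {p | p.1 ≤ p.2}).map (fun p => min p.1 p.2)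
      = μ.withDensity fun t => ν (Ici t) := by
  ext A hA
  have hset : (fun p : ℝ × ℝ => min p.1 p.2) ⁻¹' A ∩ {p | p.1 ≤ p.2}
      = {p | p.1 ∈ A ∧ p.1 ≤ p.2} := by
    ext ⟨t, c⟩
    simp only [mem_inter_iff, mem_preimage, mem_ofPred_eq]
    constructor
    · rintro ⟨h, htc⟩; rw [min_eq_left htc] at h; exact ⟨h, htc⟩
    · rintro ⟨h, htc⟩; rw [min_eq_left htc]; exact ⟨h, htc⟩
  have hmeas : MeasurableSet {p : ℝ × ℝ | p.1 ∈ A ∧ p.1 ≤ p.2} :=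
    (measurable_fst hA).inter (measurableSet_le measurable_fst measurable_snd)
  rw [Measure.map_apply (by fun_prop) hA,
    Measure.restrict_apply ((measurable_fst.min measurable_snd) hA), hset,
    Measure.prod_apply hmeas, withDensity_apply _ hA, ← lintegral_indicator hA]
  congr 1 with t
  by_cases ht : t ∈ A <;> simp [ht, preimage, Ici]

lemma setLIntegral_inv_survival_censored [SFinite μ] [IsFiniteMeasure ν] {A : Set ℝ}
    (hA : MeasurableSet A) (hν : ∀ s ∈ A, ν (Ici s) ≠ 0) :
    ∫⁻ s in A, ((μ.prod ν) {p | s ≤ min p.1 p.2})⁻¹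
        ∂((μ.prod ν).restrict {p | p.1 ≤ p.2}).map (fun p => min p.1 p.2)
      = ∫⁻ s in A, (μ (Ici s))⁻¹ ∂μ := by
  simp_rw [map_min_restrict_le_eq_withDensity, setOf_le_min_eq_prod, Measure.prod_prod]
  rw [setLIntegral_withDensity_eq_setLIntegral_mul _ (measurable_measure_Ici ν)
    (g := fun s => (μ (Ici s) * ν (Ici s))⁻¹)
    (((measurable_measure_Ici μ).mul (measurable_measure_Ici ν)).inv) hA]
  refine setLIntegral_congr_fun hA fun s hs => ?_
  rw [Pi.mul_apply, ENNReal.mul_inv (.inr (measure_ne_top ν _)) (.inr (hν s hs)), mul_comm,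
    mul_assoc, ENNReal.inv_mul_cancel (hν s hs) (measure_ne_top ν _), mul_one]

end IndependentCensoring

local notation "unif" => (volume.restrict (Icc (0:ℝ) 1) : Measure ℝ)

instance : IsProbabilityMeasure unif := ⟨by simp [Real.volume_Icc]⟩

lemma unif_Ici {s : ℝ} (hs : 0 ≤ s) : unif (Ici s) = ENNReal.ofReal (1 - s) := by
  rw [Measure.restrict_apply' measurableSet_Icc,
    show Ici s ∩ Icc 0 1 = Icc s 1 by
      ext; simp only [mem_inter_iff, mem_Ici, mem_Icc]; grind, Real.volume_Icc]

lemma unif_Ioi {s : ℝ} (hs : 0 ≤ s) : unif (Ioi s) = ENNReal.ofReal (1 - s) := by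
  rw [Measure.restrict_apply' measurableSet_Icc,
    show Ioi s ∩ Icc 0 1 = Ioc s 1 by
      ext; simp only [mem_inter_iff, mem_Ioi, mem_Ioc, mem_Icc]; grind, Real.volume_Ioc]

lemma unif_Iic {x : ℝ} (hx : x ≤ 1) : unif (Iic x) = ENNReal.ofReal x := by
  rw [Measure.restrict_apply' measurableSet_Icc,
    show Iic x ∩ Icc 0 1 = Icc 0 x by
      ext; simp only [mem_inter_iff, mem_Iic, mem_Icc]; grind, Real.volume_Icc, sub_zero]

lemma unif_Ioc {a b : ℝ} (ha : 0 ≤ a) (hb : b ≤ 1) : unif (Ioc a b) = ENNReal.ofReal (b - a) := by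
  rw [Measure.restrict_apply' measurableSet_Icc,
    show Ioc a b ∩ Icc 0 1 = Ioc a b by
      ext; simp only [mem_inter_iff, mem_Ioc, mem_Icc]; grind, Real.volume_Ioc]

lemma Punif_congr {S S' : Set (ℝ × ℝ)}
    (h : ∀ t ∈ Icc (0:ℝ) 1, ∀ c ∈ Icc (0:ℝ) 1, (t, c) ∈ S ↔ (t, c) ∈ S') :
    Punif S = Punif S' := by
  have hsq : MeasurableSet (Icc (0:ℝ) 1 ×ˢ Icc (0:ℝ) 1) := measurableSet_Icc.prod measurableSet_Icc
  rw [Punif, Measure.prod_restrict, Measure.restrict_apply' hsq, Measure.restrict_apply' hsq]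
  congr 1
  ext ⟨t, c⟩
  simp only [mem_inter_iff, mem_prod]
  grind

lemma measurable_exT2 : Measurable exT2 :=
  Measurable.ite (by measurability) (measurable_const.sub measurable_snd) measurable_fst

lemma Punif_le_exT2 (s : ℝ) : Punif {p | s ≤ exT2 p} = unif (Ici s) := by
  rcases le_or_gt s (1/2) with hs | hs
  · calc Punif {p | s ≤ exT2 p} = Punif (Ici s ×ˢ univ) :=
          Punif_congr fun t ht c hc => by
            simp only [exT2, mem_ofPred_eq, mem_prod, mem_Ici, mem_univ, mem_Icc] at *
            grind
      _ = unif (Ici s) := by rw [Punif, Measure.prod_prod, measure_univ, mul_one]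
  · have hdisj : Disjoint (Ici (1/2) ×ˢ Iic (1 - s)) (Ici s ×ˢ Ici (1/2 : ℝ)) :=
      disjoint_left.mpr fun p h₁ h₂ => by
        simp only [mem_prod, mem_Ici, mem_Iic] at h₁ h₂; linarith
    calc Punif {p | s ≤ exT2 p} = Punif (Ici (1/2) ×ˢ Iic (1 - s) ∪ Ici s ×ˢ Ici (1/2)) :=
          Punif_congr fun t ht c hc => by
            simp only [exT2, mem_ofPred_eq, mem_prod, mem_Ici, mem_Iic, mem_union, mem_Icc] at *
            grind
      _ = unif (Ici (1/2)) * unif (Iic (1 - s)) + unif (Ici s) * unif (Ici (1/2)) := by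
          rw [measure_union hdisj (measurableSet_Ici.prod measurableSet_Ici), Punif,
            Measure.prod_prod, Measure.prod_prod]
      _ = unif (Ici s) := by
          rw [unif_Ici (by norm_num), unif_Iic (by linarith), unif_Ici (by linarith),
            mul_comm _ (ENNReal.ofReal (1 - s)), ← mul_add,
            ← ENNReal.ofReal_add (by norm_num) (by norm_num)]
          norm_num

lemma exMu_eq_unif : exMu = unif := by
  refine (Measure.ext_of_Ici _ _ fun s => ?_).symm
  rw [exMu, Measure.map_apply measurable_exT2 measurableSet_Ici]
  exact (Punif_le_exT2 s).symm

lemma Punif_lt_exTt (s : ℝ) : Punif {p | s < exTt p} = unif (Ioi s) * unif (Ioi s) := by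
  rw [← Measure.prod_prod, ← setOf_lt_min_eq_prod]; rfl

lemma Punif_lt_exT2 (s : ℝ) : Punif {p | s < exT2 p} = unif (Ioi s) := by
  rw [← exMu_eq_unif, exMu, Measure.map_apply measurable_exT2 measurableSet_Ioi]; rfl

lemma Punif_exT2_mem_Ioc (s u : ℝ) : Punif {p | exT2 p ≤ u ∧ s < exT2 p} = unif (Ioc s u) := by
  rw [← exMu_eq_unif, exMu, Measure.map_apply measurable_exT2 measurableSet_Ioc]
  congr 1 with p
  exact and_comm

lemma measure_le_and_add_measure_lt_and {α : Type*} [MeasurableSpace α] (μ : Measure α)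
    {f : α → ℝ} (hf : Measurable f) (u : ℝ) (B : Set α) :
    μ {x | f x ≤ u ∧ x ∈ B} + μ {x | u < f x ∧ x ∈ B} = μ B := by
  rw [← measure_inter_add_sdiff B (hf (measurableSet_Iic (a := u)))]
  congr 2 <;> ext x <;> simp [and_comm]

lemma Punif_exT2_gt_and_exTt_gt :
    Punif {p | 3/4 < exT2 p ∧ 1/4 < exTt p} = ENNReal.ofReal (1/8) := by
  calc Punif {p | 3/4 < exT2 p ∧ 1/4 < exTt p} = Punif (Ioi (3/4) ×ˢ Ici (1/2)) :=
        Punif_congr fun t ht c hc => by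
          simp only [exT2, exTt, mem_ofPred_eq, mem_prod, mem_Ici, mem_Ioi, mem_Icc, lt_min_iff]
            at *
          grind
    _ = ENNReal.ofReal (1/8) := by
        rw [Punif, Measure.prod_prod, unif_Ioi (by norm_num), unif_Ici (by norm_num),
          ← ENNReal.ofReal_mul (by norm_num)]
        norm_num

lemma Punif_exT2_le_and_exTt_gt :
    Punif {p | exT2 p ≤ 3/4 ∧ 1/4 < exTt p} = ENNReal.ofReal (7/16) := by
  have hsplit := measure_le_and_add_measure_lt_and Punif measurable_exT2 (3/4) {p | 1/4 < exTt p}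
  simp only [mem_ofPred_eq] at hsplit
  rw [Punif_exT2_gt_and_exTt_gt, Punif_lt_exTt, unif_Ioi (by norm_num),
    ← ENNReal.ofReal_mul (by norm_num)] at hsplit
  rw [ENNReal.eq_sub_of_add_eq ENNReal.ofReal_ne_top hsplit, ← ENNReal.ofReal_sub _ (by norm_num)]
  norm_num

/-- With `(T₂, D ≡ 1)` as underlying event time and type and `(T̃, D̃)` observed:
identity of forces of mortality holds, but non-prognostic observation fails.  Hence the
identifiability property does not imply the representativity property. -/
theorem identifiability_without_representativity :
    -- (i) identity of forces of mortality on [0,1)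
    (∀ u : ℝ, 0 ≤ u → u < 1 →
      ∫⁻ s in Ioc (0:ℝ) u, (Punif {p | s ≤ exT2 p})⁻¹ ∂exMu
        = ∫⁻ s in Ioc (0:ℝ) u, (Punif {p | s ≤ exTt p})⁻¹ ∂exMut1) ∧
    -- (ii) non-prognostic observation fails
    (∃ s u : ℝ, 0 < s ∧ s < 1 ∧ 0 < u ∧ u < 1 ∧
      0 < Punif {p | s < exTt p} ∧ 0 < Punif {p | s < exT2 p} ∧
      Punif {p | exT2 p ≤ u ∧ s < exTt p} / Punif {p | s < exTt p}
        ≠ Punif {p | exT2 p ≤ u ∧ s < exT2 p} / Punif {p | s < exT2 p}) := by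
  refine ⟨fun u _ hu => ?_, 1/4, 3/4, by norm_num, by norm_num, by norm_num, by norm_num, ?_⟩
  · simp_rw [Punif_le_exT2, exMu_eq_unif]
    refine (setLIntegral_inv_survival_censored measurableSet_Ioc fun s hs => ?_).symm
    rw [unif_Ici hs.1.le, ENNReal.ofReal_ne_zero_iff]
    linarith [hs.2]
  · have hTt : Punif {p | 1/4 < exTt p} = ENNReal.ofReal (9/16) := by
      rw [Punif_lt_exTt, unif_Ioi (by norm_num), ← ENNReal.ofReal_mul (by norm_num)]; norm_num
    have hT2 : Punif {p | 1/4 < exT2 p} = ENNReal.ofReal (3/4) := by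
      rw [Punif_lt_exT2, unif_Ioi (by norm_num)]; norm_num
    have hT2_le : Punif {p | exT2 p ≤ 3/4 ∧ 1/4 < exT2 p} = ENNReal.ofReal (1/2) := by
      rw [Punif_exT2_mem_Ioc, unif_Ioc (by norm_num) (by norm_num)]; norm_num
    refine ⟨by rw [hTt]; exact ENNReal.ofReal_pos.mpr (by norm_num),
      by rw [hT2]; exact ENNReal.ofReal_pos.mpr (by norm_num), ?_⟩
    rw [hTt, hT2, hT2_le, Punif_exT2_le_and_exTt_gt, ← ENNReal.ofReal_div_of_pos (by norm_num),
      ← ENNReal.ofReal_div_of_pos (by norm_num), Ne, ENNReal.ofReal_eq_ofReal_iff (by norm_num)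
      (by norm_num)]
    norm_num
end

section
/- Each of the random variables T₁, T₂, C₁, C₂ has the uniform distribution on [0,1]; that is, the pushforward measures of P under T₁, T₂, C₁, and C₂ all equal the Lebesgue measure restricted to [0,1]. -/
open Set MeasureTheory

noncomputable def exT1 (p : ℝ × ℝ) : ℝ := p.1

noncomputable def exC1 (p : ℝ × ℝ) : ℝ := p.2

noncomputable def exC2 (p : ℝ × ℝ) : ℝ :=
  if 0 ≤ p.1 ∧ p.1 ≤ 1/2 ∧ 1/2 ≤ p.2 ∧ p.2 ≤ 1 then 1 - p.1 else p.2

lemma refl_preimage (E : Set ℝ) (hE : MeasurableSet E) :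
    volume ((fun x : ℝ => 1 - x) ⁻¹' E) = volume E :=
  (Measure.measurePreserving_sub_left volume 1).measure_preimage hE.nullMeasurableSet

lemma half_add_half : ENNReal.ofReal (1/2) + ENNReal.ofReal (1/2) = 1 := by
  rw [← ENNReal.ofReal_add (by norm_num) (by norm_num)]
  norm_num

lemma mapT2 : Measure.map exT2 Punif = volume.restrict (Icc (0:ℝ) 1) := by
  have hA : MeasurableSet (Icc (1/2:ℝ) 1 ×ˢ Ico (0:ℝ) (1/2)) :=
    measurableSet_Icc.prod measurableSet_Ico
  have heq : exT2 = (Icc (1/2:ℝ) 1 ×ˢ Ico (0:ℝ) (1/2)).piecewise (fun p => 1 - p.2) Prod.fst := by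
    funext p
    simp [exT2, Set.piecewise, Set.mem_prod, and_assoc]
  have hm : Measurable exT2 := by
    rw [heq]; exact Measurable.piecewise hA (by fun_prop) measurable_fst
  ext s hs
  rw [Measure.map_apply hm hs]
  have hpre : exT2 ⁻¹' s =
      ((Icc (1/2:ℝ) 1) ×ˢ (Ico (0:ℝ) (1/2) ∩ (fun c : ℝ => 1 - c) ⁻¹' s)) ∪
      (((s ∩ (Icc (1/2:ℝ) 1)ᶜ) ×ˢ (univ : Set ℝ)) ∪
        ((s ∩ Icc (1/2:ℝ) 1) ×ˢ (Ico (0:ℝ) (1/2))ᶜ)) := by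
    ext p
    by_cases h : 1/2 ≤ p.1 ∧ p.1 ≤ 1 ∧ 0 ≤ p.2 ∧ p.2 < 1/2 <;>
      simp only [exT2, if_pos, if_neg, h, mem_preimage, if_true, if_false, mem_union,
        mem_prod, mem_Icc, mem_Ico, mem_inter_iff, mem_compl_iff, mem_univ, and_true] <;> tauto
  rw [hpre]
  have d1 : Disjoint ((Icc (1/2:ℝ) 1) ×ˢ (Ico (0:ℝ) (1/2) ∩ (fun c : ℝ => 1 - c) ⁻¹' s))
      (((s ∩ (Icc (1/2:ℝ) 1)ᶜ) ×ˢ (univ : Set ℝ)) ∪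
        ((s ∩ Icc (1/2:ℝ) 1) ×ˢ (Ico (0:ℝ) (1/2))ᶜ)) := by
    rw [Set.disjoint_left]
    rintro ⟨x, y⟩ ⟨h1, h2, _⟩ (⟨⟨_, h4⟩, _⟩ | ⟨_, h4⟩) <;> exact h4 (by assumption)
  have d2 : Disjoint ((s ∩ (Icc (1/2:ℝ) 1)ᶜ) ×ˢ (univ : Set ℝ))
      ((s ∩ Icc (1/2:ℝ) 1) ×ˢ (Ico (0:ℝ) (1/2))ᶜ) := by
    rw [Set.disjoint_left]
    rintro ⟨x, y⟩ ⟨⟨_, h2⟩, _⟩ ⟨⟨_, h4⟩, _⟩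
    exact h2 h4
  have hms : ∀ u v : Set ℝ, MeasurableSet u → MeasurableSet v → MeasurableSet (u ×ˢ v) :=
    fun u v hu hv => hu.prod hv
  rw [measure_union d1 (((hs.inter measurableSet_Icc.compl).prod MeasurableSet.univ).union
    ((hs.inter measurableSet_Icc).prod measurableSet_Ico.compl)),
    measure_union d2 ((hs.inter measurableSet_Icc).prod measurableSet_Ico.compl)]
  unfold Punif
  rw [Measure.prod_prod, Measure.prod_prod, Measure.prod_prod]
  have h1 : (volume.restrict (Icc (0:ℝ) 1)) (Icc (1/2:ℝ) 1) = ENNReal.ofReal (1/2) := by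
    rw [Measure.restrict_apply measurableSet_Icc,
      inter_eq_left.mpr (Icc_subset_Icc (by norm_num) le_rfl), Real.volume_Icc]
    norm_num
  have h2 : (volume.restrict (Icc (0:ℝ) 1)) (Ico (0:ℝ) (1/2) ∩ (fun c : ℝ => 1 - c) ⁻¹' s)
      = volume (Icc (1/2:ℝ) 1 ∩ s) := by
    rw [Measure.restrict_apply (measurableSet_Ico.inter (hs.preimage (by fun_prop)))]
    have e1 : Ico (0:ℝ) (1/2) ∩ (fun c : ℝ => 1 - c) ⁻¹' s ∩ Icc 0 1
        = (fun c : ℝ => 1 - c) ⁻¹' (Ioc (1/2:ℝ) 1 ∩ s) := by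
      ext x
      simp only [mem_inter_iff, mem_Ico, mem_Icc, mem_preimage, mem_Ioc]
      constructor
      · rintro ⟨⟨⟨hx1, hx2⟩, hx3⟩, _⟩
        exact ⟨⟨by linarith, by linarith⟩, hx3⟩
      · rintro ⟨⟨hx1, hx2⟩, hx3⟩
        exact ⟨⟨⟨by linarith, by linarith⟩, hx3⟩, by constructor <;> linarith⟩
    rw [e1, refl_preimage _ (measurableSet_Ioc.inter hs)]
    exact measure_congr ((Ioc_ae_eq_Icc (μ := volume)).inter Filter.EventuallyEq.rfl)
  have h3 : (volume.restrict (Icc (0:ℝ) 1)) (s ∩ (Icc (1/2:ℝ) 1)ᶜ)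
      = volume (s ∩ Ico (0:ℝ) (1/2)) := by
    rw [Measure.restrict_apply (hs.inter measurableSet_Icc.compl)]
    congr 1
    ext x
    simp only [mem_inter_iff, mem_compl_iff, mem_Icc, mem_Ico, not_and, not_le]
    constructor
    · rintro ⟨⟨hx1, hx2⟩, hx3, hx4⟩
      refine ⟨hx1, hx3, ?_⟩
      by_contra h
      push_neg at h
      exact absurd (hx2 h) (not_lt.mpr hx4)
    · rintro ⟨hx1, hx2, hx3⟩
      exact ⟨⟨hx1, fun h => absurd h (not_le.mpr hx3)⟩, hx2, by linarith⟩
  have h4 : (volume.restrict (Icc (0:ℝ) 1)) (s ∩ Icc (1/2:ℝ) 1)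
      = volume (s ∩ Icc (1/2:ℝ) 1) := by
    rw [Measure.restrict_apply (hs.inter measurableSet_Icc),
      inter_eq_left.mpr (inter_subset_right.trans (Icc_subset_Icc (by norm_num) le_rfl))]
  have h5 : (volume.restrict (Icc (0:ℝ) 1)) (univ : Set ℝ) = 1 := by simp
  have h6 : (volume.restrict (Icc (0:ℝ) 1)) ((Ico (0:ℝ) (1/2))ᶜ) = ENNReal.ofReal (1/2) := by
    rw [Measure.restrict_apply measurableSet_Ico.compl]
    have : (Ico (0:ℝ) (1/2))ᶜ ∩ Icc 0 1 = Icc (1/2:ℝ) 1 := by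
      ext x
      simp only [mem_inter_iff, mem_compl_iff, mem_Ico, mem_Icc, not_and, not_lt]
      constructor
      · rintro ⟨h1, h2, h3⟩
        exact ⟨h1 h2, h3⟩
      · rintro ⟨h1, h2⟩
        exact ⟨fun _ => h1, by linarith, h2⟩
    rw [this, Real.volume_Icc]
    norm_num
  rw [h1, h2, h3, h4, h5, h6, Measure.restrict_apply hs]
  have h8 : volume (s ∩ Ico (0:ℝ) (1/2)) + volume (s ∩ Icc (1/2:ℝ) 1)
      = volume (s ∩ Icc (0:ℝ) 1) := by
    have hd : Disjoint (s ∩ Ico (0:ℝ) (1/2)) (s ∩ Icc (1/2:ℝ) 1) := by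
      rw [Set.disjoint_left]
      rintro x ⟨-, -, hx2⟩ ⟨-, hx3, -⟩
      exact absurd hx3 (not_le.mpr hx2)
    rw [← measure_union hd (hs.inter measurableSet_Icc), ← Set.inter_union_distrib_left,
      Ico_union_Icc_eq_Icc (by norm_num) (by norm_num)]
  rw [inter_comm (Icc (1/2:ℝ) 1) s]
  have : ENNReal.ofReal (1/2) * volume (s ∩ Icc (1/2:ℝ) 1) +
      (volume (s ∩ Ico (0:ℝ) (1/2)) * 1 +
        volume (s ∩ Icc (1/2:ℝ) 1) * ENNReal.ofReal (1/2)) =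
      (ENNReal.ofReal (1/2) + ENNReal.ofReal (1/2)) * volume (s ∩ Icc (1/2:ℝ) 1) +
        volume (s ∩ Ico (0:ℝ) (1/2)) := by ring
  rw [this, half_add_half, one_mul, add_comm]
  exact h8

lemma mapC2 : Measure.map exC2 Punif = volume.restrict (Icc (0:ℝ) 1) := by
  have hB : MeasurableSet (Icc (0:ℝ) (1/2) ×ˢ Icc (1/2:ℝ) 1) :=
    measurableSet_Icc.prod measurableSet_Icc
  have heq : exC2 = (Icc (0:ℝ) (1/2) ×ˢ Icc (1/2:ℝ) 1).piecewise (fun p => 1 - p.1) Prod.snd := by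
    funext p
    rcases Classical.em (0 ≤ p.1 ∧ p.1 ≤ 1/2 ∧ 1/2 ≤ p.2 ∧ p.2 ≤ 1) with h | h
    · rw [exC2, if_pos h,
        Set.piecewise_eq_of_mem _ _ _ (show p ∈ Icc (0:ℝ) (1/2) ×ˢ Icc (1/2:ℝ) 1 from ⟨⟨h.1, h.2.1⟩, h.2.2.1, h.2.2.2⟩)]
    · rw [exC2, if_neg h, Set.piecewise_eq_of_notMem _ _ _
        (fun hp : p ∈ Icc (0:ℝ) (1/2) ×ˢ Icc (1/2:ℝ) 1 => h ⟨hp.1.1, hp.1.2, hp.2.1, hp.2.2⟩)]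
  have hm : Measurable exC2 := by
    rw [heq]; exact Measurable.piecewise hB (by fun_prop) measurable_snd
  ext s hs
  rw [Measure.map_apply hm hs]
  have hpre : exC2 ⁻¹' s =
      ((Icc (0:ℝ) (1/2) ∩ (fun t : ℝ => 1 - t) ⁻¹' s) ×ˢ Icc (1/2:ℝ) 1) ∪
      (((Icc (0:ℝ) (1/2))ᶜ ×ˢ s) ∪ (Icc (0:ℝ) (1/2) ×ˢ (s ∩ (Icc (1/2:ℝ) 1)ᶜ))) := by
    ext p
    by_cases h : 0 ≤ p.1 ∧ p.1 ≤ 1/2 ∧ 1/2 ≤ p.2 ∧ p.2 ≤ 1 <;>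
      simp only [exC2, if_pos, if_neg, h, mem_preimage, if_true, if_false, mem_union,
        mem_prod, mem_Icc, mem_inter_iff, mem_compl_iff] <;> tauto
  rw [hpre]
  have d1 : Disjoint ((Icc (0:ℝ) (1/2) ∩ (fun t : ℝ => 1 - t) ⁻¹' s) ×ˢ Icc (1/2:ℝ) 1)
      (((Icc (0:ℝ) (1/2))ᶜ ×ˢ s) ∪ (Icc (0:ℝ) (1/2) ×ˢ (s ∩ (Icc (1/2:ℝ) 1)ᶜ))) := by
    rw [Set.disjoint_left]
    rintro ⟨x, y⟩ ⟨⟨h1, -⟩, h2⟩ (⟨h3, -⟩ | ⟨-, -, h4⟩)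
    · exact h3 h1
    · exact h4 h2
  have d2 : Disjoint ((Icc (0:ℝ) (1/2))ᶜ ×ˢ s)
      (Icc (0:ℝ) (1/2) ×ˢ (s ∩ (Icc (1/2:ℝ) 1)ᶜ)) := by
    rw [Set.disjoint_left]
    rintro ⟨x, y⟩ ⟨h1, -⟩ ⟨h2, -⟩
    exact h1 h2
  rw [measure_union d1 ((measurableSet_Icc.compl.prod hs).union
      (measurableSet_Icc.prod (hs.inter measurableSet_Icc.compl))),
    measure_union d2 (measurableSet_Icc.prod (hs.inter measurableSet_Icc.compl))]
  unfold Punif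
  rw [Measure.prod_prod, Measure.prod_prod, Measure.prod_prod]
  have h1 : (volume.restrict (Icc (0:ℝ) 1)) (Icc (1/2:ℝ) 1) = ENNReal.ofReal (1/2) := by
    rw [Measure.restrict_apply measurableSet_Icc,
      inter_eq_left.mpr (Icc_subset_Icc (by norm_num) le_rfl), Real.volume_Icc]
    norm_num
  have h2 : (volume.restrict (Icc (0:ℝ) 1)) (Icc (0:ℝ) (1/2) ∩ (fun t : ℝ => 1 - t) ⁻¹' s)
      = volume (s ∩ Icc (1/2:ℝ) 1) := by
    rw [Measure.restrict_apply (measurableSet_Icc.inter (hs.preimage (by fun_prop)))]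
    have e1 : Icc (0:ℝ) (1/2) ∩ (fun t : ℝ => 1 - t) ⁻¹' s ∩ Icc 0 1
        = (fun t : ℝ => 1 - t) ⁻¹' (s ∩ Icc (1/2:ℝ) 1) := by
      ext x
      simp only [mem_inter_iff, mem_Icc, mem_preimage]
      constructor
      · rintro ⟨⟨⟨hx1, hx2⟩, hx3⟩, -⟩
        exact ⟨hx3, by linarith, by linarith⟩
      · rintro ⟨hx1, hx2, hx3⟩
        exact ⟨⟨⟨by linarith, by linarith⟩, hx1⟩, by linarith, by linarith⟩
    rw [e1, refl_preimage _ (hs.inter measurableSet_Icc)]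
  have h3 : (volume.restrict (Icc (0:ℝ) 1)) ((Icc (0:ℝ) (1/2))ᶜ) = ENNReal.ofReal (1/2) := by
    rw [Measure.restrict_apply measurableSet_Icc.compl]
    have e : (Icc (0:ℝ) (1/2))ᶜ ∩ Icc 0 1 = Ioc (1/2:ℝ) 1 := by
      ext x
      simp only [mem_inter_iff, mem_compl_iff, mem_Icc, mem_Ioc, not_and, not_le]
      constructor
      · rintro ⟨h1, h2, h3⟩
        exact ⟨h1 h2, h3⟩
      · rintro ⟨h1, h2⟩
        exact ⟨fun _ => h1, by linarith, h2⟩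
    rw [e, Real.volume_Ioc]
    norm_num
  have h4 : (volume.restrict (Icc (0:ℝ) 1)) s = volume (s ∩ Icc (0:ℝ) 1) :=
    Measure.restrict_apply hs
  have h5 : (volume.restrict (Icc (0:ℝ) 1)) (Icc (0:ℝ) (1/2)) = ENNReal.ofReal (1/2) := by
    rw [Measure.restrict_apply measurableSet_Icc,
      inter_eq_left.mpr (Icc_subset_Icc le_rfl (by norm_num)), Real.volume_Icc]
    norm_num
  have h6 : (volume.restrict (Icc (0:ℝ) 1)) (s ∩ (Icc (1/2:ℝ) 1)ᶜ)
      = volume (s ∩ Ico (0:ℝ) (1/2)) := by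
    rw [Measure.restrict_apply (hs.inter measurableSet_Icc.compl)]
    congr 1
    ext x
    simp only [mem_inter_iff, mem_compl_iff, mem_Icc, mem_Ico, not_and, not_le]
    constructor
    · rintro ⟨⟨hx1, hx2⟩, hx3, hx4⟩
      refine ⟨hx1, hx3, ?_⟩
      by_contra h
      push_neg at h
      exact absurd (hx2 h) (not_lt.mpr hx4)
    · rintro ⟨hx1, hx2, hx3⟩
      exact ⟨⟨hx1, fun h => absurd h (not_le.mpr hx3)⟩, hx2, by linarith⟩
  rw [h1, h2, h3, h4, h5, h6]
  have h8 : volume (s ∩ Ico (0:ℝ) (1/2)) + volume (s ∩ Icc (1/2:ℝ) 1)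
      = volume (s ∩ Icc (0:ℝ) 1) := by
    have hd : Disjoint (s ∩ Ico (0:ℝ) (1/2)) (s ∩ Icc (1/2:ℝ) 1) := by
      rw [Set.disjoint_left]
      rintro x ⟨-, -, hx2⟩ ⟨-, hx3, -⟩
      exact absurd hx3 (not_le.mpr hx2)
    rw [← measure_union hd (hs.inter measurableSet_Icc), ← Set.inter_union_distrib_left,
      Ico_union_Icc_eq_Icc (by norm_num) (by norm_num)]
  have harith : volume (s ∩ Icc (1/2:ℝ) 1) * ENNReal.ofReal (1/2) +
      (ENNReal.ofReal (1/2) * volume (s ∩ Icc (0:ℝ) 1) +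
        ENNReal.ofReal (1/2) * volume (s ∩ Ico (0:ℝ) (1/2))) =
      ENNReal.ofReal (1/2) * (volume (s ∩ Ico (0:ℝ) (1/2)) + volume (s ∩ Icc (1/2:ℝ) 1)) +
        ENNReal.ofReal (1/2) * volume (s ∩ Icc (0:ℝ) 1) := by ring
  rw [harith, h8, ← add_mul, half_add_half, one_mul]

/-- Each of `T₁, T₂, C₁, C₂` is uniformly distributed on `[0,1]`: the pushforward of the
uniform measure on the square equals Lebesgue measure restricted to `[0,1]`. -/
theorem uniform_distributions :
    Measure.map exT1 Punif = volume.restrict (Icc (0:ℝ) 1) ∧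
    Measure.map exT2 Punif = volume.restrict (Icc (0:ℝ) 1) ∧
    Measure.map exC1 Punif = volume.restrict (Icc (0:ℝ) 1) ∧
    Measure.map exC2 Punif = volume.restrict (Icc (0:ℝ) 1) := by
  refine ⟨?_, mapT2, ?_, mapC2⟩
  · have h : exT1 = Prod.fst := rfl
    rw [h]
    unfold Punif
    rw [Measure.map_fst_prod]
    simp
  · have h : exC1 = Prod.snd := rfl
    rw [h]
    unfold Punif
    rw [Measure.map_snd_prod]
    simp
end

section
/- The following are equivalent: (i) Ȟ₀(t) = H₀(t) for all t ∈ 𝒥; (ii) for every Borel set A ⊆ 𝒥, μ̃₀(A) = ∫_A (Š(s)/K(s−)) ν_C(ds), where μ̃₀(A) = P(C ∈ A, T > C). (Condition (ii) is the integrated form of the statement that P(T̃ = t, D̃ = 0 | C = t) = P(T > t | C ≥ t) for ν_C-almost all t ∈ 𝒥; note K(s−) ≥ S̃(s−) > 0 for s ∈ 𝒥.) -/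
/-!
Both conditions say that two measures agree on `𝒥`. Condition (ii) says that `μ̃₀` equals
`(Š / K(·−)) · ν_C` there; since `Š` is positive and finite on `𝒥`, multiplying by the density
`1 / Š` turns this into the agreement on `𝒥` of the hazard measures `dȞ₀ = μ̃₀ / Š` and
`dH₀ = ν_C / K(·−)`. Both charge nothing in `(-∞, 0]` and are finite on `(0, t]` for `t ∈ 𝒥`
(there `1 / Š ≤ 1 / Š(t)`), so they agree on `𝒥` iff their distribution functions `Ȟ₀` and `H₀`
agree on `𝒥`, which is (i); a countable cofinal sequence in `𝒥` passes from the intervals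
`(-∞, t]` to all of `𝒥`.
-/

open MeasureTheory Set ENNReal

namespace MeasureTheory.Measure

variable {α : Type*} {m : MeasurableSpace α}

theorem restrict_Iic_eq_of_forall_le [TopologicalSpace α] [LinearOrder α] [OrderTopology α]
    [SecondCountableTopology α] [BorelSpace α] {μ ν : Measure α} {t : α} (hμt : μ (Iic t) ≠ ∞)
    (h : ∀ s ≤ t, μ (Iic s) = ν (Iic s)) : μ.restrict (Iic t) = ν.restrict (Iic t) := by
  have : IsFiniteMeasure (μ.restrict (Iic t)) := isFiniteMeasure_restrict.2 hμt
  refine ext_of_Iic _ _ fun s => ?_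
  rw [restrict_apply measurableSet_Iic, restrict_apply measurableSet_Iic, Iic_inter_Iic,
    h _ inf_le_right]

open Filter in
theorem restrict_eq_of_forall_restrict_Iic_eq [TopologicalSpace α] [LinearOrder α]
    [OrderTopology α] [SecondCountableTopology α] {μ ν : Measure α} {S : Set α} [S.OrdConnected]
    (h : ∀ t ∈ S, μ.restrict (Iic t) = ν.restrict (Iic t)) : μ.restrict S = ν.restrict S := by
  rcases S.eq_empty_or_nonempty with rfl | ⟨x, hx⟩
  · simp
  have : Nonempty S := ⟨⟨x, hx⟩⟩
  -- `OrdConnected` gives `S` the order topology, so `atTop` on `S` is countably generated.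
  obtain ⟨u, hu⟩ := exists_seq_tendsto (atTop : Filter S)
  have hcover : S ⊆ ⋃ n, Iic (u n : α) := fun s hs =>
    let ⟨n, hn⟩ := (hu.eventually (eventually_ge_atTop ⟨s, hs⟩)).exists
    mem_iUnion.2 ⟨n, hn⟩
  exact restrict_congr_mono hcover (restrict_iUnion_congr.2 fun n => h _ (u n).2)

theorem restrict_eq_restrict_iff_forall_Ioc [TopologicalSpace α] [LinearOrder α]
    [OrderTopology α] [SecondCountableTopology α] [BorelSpace α] {μ ν : Measure α} {S : Set α}
    [S.OrdConnected] {a : α} (hS : ∀ t ∈ S, Ioc a t ⊆ S) (hμa : μ (Iic a) = 0)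
    (hνa : ν (Iic a) = 0) (hfin : ∀ t ∈ S, μ (Iic t) ≠ ∞) :
    μ.restrict S = ν.restrict S ↔ ∀ t ∈ S, μ (Ioc a t) = ν (Ioc a t) := by
  refine ⟨fun h t ht => ?_, fun h => restrict_eq_of_forall_restrict_Iic_eq fun t ht =>
    restrict_Iic_eq_of_forall_le (hfin t ht) fun s hst => ?_⟩
  · rw [← restrict_eq_self μ (hS t ht), h, restrict_eq_self ν (hS t ht)]
  · rcases le_or_gt s a with hsa | has
    · rw [measure_mono_null (Iic_subset_Iic.2 hsa) hμa,
        measure_mono_null (Iic_subset_Iic.2 hsa) hνa]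
    · rw [← measure_sdiff_null hμa, ← measure_sdiff_null hνa, Iic_sdiff_Iic,
        h s (hS t ht ⟨has, hst⟩)]

theorem restrict_withDensity_eq_iff {μ ν : Measure α} {s : Set α} (hs : MeasurableSet s)
    {f : α → ℝ≥0∞} (hf : Measurable f) (hf0 : ∀ x ∈ s, f x ≠ 0) (hftop : ∀ x ∈ s, f x ≠ ∞) :
    (μ.withDensity f).restrict s = (ν.withDensity f).restrict s ↔
      μ.restrict s = ν.restrict s := by
  rw [restrict_withDensity hs, restrict_withDensity hs]
  refine ⟨fun h => ?_, fun h => h ▸ rfl⟩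
  calc μ.restrict s = ((μ.restrict s).withDensity f).withDensity fun x => (f x)⁻¹ :=
        (withDensity_inv_same hf (ae_restrict_of_forall_mem hs hf0)
          (ae_restrict_of_forall_mem hs hftop)).symm
    _ = ((ν.restrict s).withDensity f).withDensity fun x => (f x)⁻¹ := by rw [h]
    _ = ν.restrict s := withDensity_inv_same hf (ae_restrict_of_forall_mem hs hf0)
          (ae_restrict_of_forall_mem hs hftop)

theorem restrict_withDensity_inv_eq_iff {μ ν : Measure α} {s : Set α} (hs : MeasurableSet s)
    {f g : α → ℝ≥0∞} (hf : Measurable f) (hg : Measurable g) (hf0 : ∀ x ∈ s, f x ≠ 0)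
    (hftop : ∀ x ∈ s, f x ≠ ∞) :
    (μ.withDensity fun x => (f x)⁻¹).restrict s = (ν.withDensity fun x => (g x)⁻¹).restrict s ↔
      μ.restrict s = (ν.withDensity fun x => f x / g x).restrict s := by
  have hdensity : ((ν.withDensity fun x => f x / g x).withDensity fun x => (f x)⁻¹).restrict s
      = (ν.withDensity fun x => (g x)⁻¹).restrict s := by
    rw [← withDensity_mul (f := fun x => f x / g x) (g := fun x => (f x)⁻¹) _ (hf.div hg) hf.inv,
      restrict_withDensity hs, restrict_withDensity hs]
    refine withDensity_congr_ae (ae_restrict_of_forall_mem hs fun x hx => ?_)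
    simp only [Pi.mul_apply]
    rw [div_eq_mul_inv, mul_right_comm, ENNReal.mul_inv_cancel (hf0 x hx) (hftop x hx), one_mul]
  rw [← hdensity]
  exact restrict_withDensity_eq_iff hs hf.inv (fun x hx => ENNReal.inv_ne_zero.2 (hftop x hx))
    fun x hx => ENNReal.inv_ne_top.2 (hf0 x hx)

theorem restrict_eq_restrict_withDensity_iff {μ ν : Measure α} {s : Set α} (hs : MeasurableSet s)
    (f : α → ℝ≥0∞) : μ.restrict s = (ν.withDensity f).restrict s ↔
      ∀ A, MeasurableSet A → A ⊆ s → μ A = ∫⁻ x in A, f x ∂ν := by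
  rw [restrict_congr_meas hs]
  exact forall_congr' fun A => ⟨fun h hA hAs => (h hAs hA).trans (withDensity_apply _ hA),
    fun h hAs hA => (h hA hAs).trans (withDensity_apply _ hA).symm⟩

theorem withDensity_inv_Iic_ne_top [LinearOrder α] [TopologicalSpace α] [ClosedIicTopology α]
    [OpensMeasurableSpace α] {μ : Measure α} [IsFiniteMeasure μ] {f : α → ℝ≥0∞}
    (hf : Antitone f) {t : α} (ht : f t ≠ 0) : μ.withDensity (fun x => (f x)⁻¹) (Iic t) ≠ ∞ := by
  rw [withDensity_apply _ measurableSet_Iic]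
  refine ne_top_of_le_ne_top (mul_ne_top (inv_ne_top.2 ht) (measure_ne_top μ (Iic t))) ?_
  calc ∫⁻ x in Iic t, (f x)⁻¹ ∂μ ≤ ∫⁻ _ in Iic t, (f t)⁻¹ ∂μ :=
        setLIntegral_mono' measurableSet_Iic fun x hx => ENNReal.inv_le_inv.2 (hf hx)
    _ = (f t)⁻¹ * μ (Iic t) := setLIntegral_const _ _

theorem map_Iic_eq_zero_of_ae_lt [LinearOrder α] [TopologicalSpace α] [ClosedIicTopology α]
    [OpensMeasurableSpace α] {Ω : Type*} [MeasurableSpace Ω] {ρ : Measure Ω} {X : Ω → α}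
    (hX : Measurable X) {a : α} (h : ∀ᵐ ω ∂ρ, a < X ω) : ρ.map X (Iic a) = 0 := by
  rw [map_apply hX measurableSet_Iic]
  exact measure_mono_null (fun ω hω => not_lt.2 hω) (ae_iff.1 h)

end MeasureTheory.Measure

theorem censoring_identity_iff_cond_prob_given_C_general
    {Ω : Type*} [m0 : MeasurableSpace Ω] (P : Measure Ω) [IsProbabilityMeasure P]
    (T C : Ω → ℝ)
    (hT : Measurable T) (hC : Measurable C)
    (hTpos : ∀ᵐ ω ∂P, 0 < T ω) (hCpos : ∀ᵐ ω ∂P, 0 < C ω)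
    -- the observed exit time T̃ = T ∧ C and exit type D̃ = D·1{T ≤ C}
    (Tt : Ω → ℝ) (hTtdef : ∀ ω, Tt ω = min (T ω) (C ω))
    (Dt : Ω → ℕ)
    -- μ̃_j(A) = P(T̃ ∈ A, D̃ = j) and ν_C(A) = P(C ∈ A)
    (μt : ℕ → Measure ℝ)
    (hμt : ∀ j, μt j = Measure.map Tt (P.restrict {ω | Dt ω = j}))
    (νC : Measure ℝ) (hνC : νC = Measure.map C P)
    -- H₀(t) = ∫_{(0,t]} K(s−)⁻¹ ν_C(ds)
    (H0 : ℝ → ℝ≥0∞) (hH0 : ∀ t, H0 t = ∫⁻ s in Ioc 0 t, (P {ω | s ≤ C ω})⁻¹ ∂νC)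
    -- Ȟ₀(t) = ∫_{(0,t]} Š(s)⁻¹ μ̃₀(ds) with Š(s) = P(T > s, C ≥ s)
    (Hc0 : ℝ → ℝ≥0∞)
    (hHc0 : ∀ t, Hc0 t = ∫⁻ s in Ioc 0 t, (P {ω | s < T ω ∧ s ≤ C ω})⁻¹ ∂(μt 0))
    (𝒥 : Set ℝ) (h𝒥 : 𝒥 = {t | 0 ≤ t ∧ 0 < P {ω | t < Tt ω}}) :
    -- (i)
    (∀ t ∈ 𝒥, Hc0 t = H0 t) ↔
    -- (ii) μ̃₀(A) = ∫_A (Š(s)/K(s−)) ν_C(ds) for all Borel A ⊆ 𝒥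
    (∀ A : Set ℝ, MeasurableSet A → A ⊆ 𝒥 →
      μt 0 A = ∫⁻ s in A, (P {ω | s < T ω ∧ s ≤ C ω}) / (P {ω | s ≤ C ω}) ∂νC) := by
  set Sh : ℝ → ℝ≥0∞ := fun s => P {ω | s < T ω ∧ s ≤ C ω}
  set K : ℝ → ℝ≥0∞ := fun s => P {ω | s ≤ C ω}
  have hSh : Antitone Sh := fun a b hab =>
    measure_mono fun ω hω => ⟨hab.trans_lt hω.1, hab.trans hω.2⟩
  have hK : Antitone K := fun a b hab => measure_mono fun ω hω => hab.trans hω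
  have hTt : Measurable Tt := (funext hTtdef : Tt = _) ▸ hT.min hC
  have hTt_pos : ∀ᵐ ω ∂P, 0 < Tt ω := by
    filter_upwards [hTpos, hCpos] with ω hTω hCω
    exact (hTtdef ω).symm ▸ lt_min hTω hCω
  have h𝒥_ordConnected : 𝒥.OrdConnected := h𝒥 ▸
    ⟨fun x hx y hy z hz => ⟨hx.1.trans hz.1,
      hy.2.trans_le (measure_mono fun ω hω => hz.2.trans_lt hω)⟩⟩
  have h𝒥_Ioc : ∀ t ∈ 𝒥, Ioc 0 t ⊆ 𝒥 := by
    rw [h𝒥]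
    exact fun t ht s hs => ⟨hs.1.le, ht.2.trans_le (measure_mono fun ω hω => hs.2.trans_lt hω)⟩
  have hSh_ne_zero : ∀ t ∈ 𝒥, Sh t ≠ 0 := by
    rw [h𝒥]
    refine fun t ht => (ht.2.trans_le (measure_mono fun ω (hω : t < Tt ω) => ?_)).ne'
    rw [hTtdef, lt_min_iff] at hω
    exact ⟨hω.1, hω.2.le⟩
  have h𝒥m : MeasurableSet 𝒥 := h𝒥_ordConnected.measurableSet
  have : IsFiniteMeasure (μt 0) := hμt 0 ▸ inferInstance
  have hμ0 : μt 0 (Iic 0) = 0 :=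
    hμt 0 ▸ Measure.map_Iic_eq_zero_of_ae_lt hTt (ae_restrict_of_ae hTt_pos)
  have hν0 : νC (Iic 0) = 0 := hνC ▸ Measure.map_Iic_eq_zero_of_ae_lt hC hCpos
  calc (∀ t ∈ 𝒥, Hc0 t = H0 t)
      ↔ ((μt 0).withDensity fun s => (Sh s)⁻¹).restrict 𝒥 =
          (νC.withDensity fun s => (K s)⁻¹).restrict 𝒥 := by
        rw [Measure.restrict_eq_restrict_iff_forall_Ioc h𝒥_Ioc
          (withDensity_absolutelyContinuous _ _ hμ0) (withDensity_absolutelyContinuous _ _ hν0)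
          fun t ht => Measure.withDensity_inv_Iic_ne_top hSh (hSh_ne_zero t ht)]
        simp only [hHc0, hH0, withDensity_apply _ measurableSet_Ioc]
        exact Iff.rfl
    _ ↔ (μt 0).restrict 𝒥 = (νC.withDensity fun s => Sh s / K s).restrict 𝒥 :=
        Measure.restrict_withDensity_inv_eq_iff h𝒥m hSh.measurable hK.measurable hSh_ne_zero
          fun s _ => measure_ne_top _ _
    _ ↔ _ := Measure.restrict_eq_restrict_withDensity_iff h𝒥m _

/-- Proposition 5 (parts (5.1) ⟺ (5.3)): `Ȟ₀ = H₀` on `𝒥` is equivalent to the integrated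
form of `P(T̃ = t, D̃ = 0 | C = t) = P(T > t | C ≥ t)`. -/
theorem censoring_identity_iff_cond_prob_given_C
    {Ω : Type*} [m0 : MeasurableSpace Ω] (P : Measure Ω) [IsProbabilityMeasure P]
    (d : ℕ) (hd : 1 ≤ d)
    (T C : Ω → ℝ) (D : Ω → ℕ)
    (hT : Measurable T) (hC : Measurable C) (hD : Measurable D)
    (hTpos : ∀ᵐ ω ∂P, 0 < T ω) (hCpos : ∀ᵐ ω ∂P, 0 < C ω)
    (hDrange : ∀ ω, 1 ≤ D ω ∧ D ω ≤ d)
    -- the observed exit time T̃ = T ∧ C and exit type D̃ = D·1{T ≤ C}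
    (Tt : Ω → ℝ) (hTtdef : ∀ ω, Tt ω = min (T ω) (C ω))
    (Dt : Ω → ℕ) (hDtdef : ∀ ω, Dt ω = if T ω ≤ C ω then D ω else 0)
    -- μ̃_j(A) = P(T̃ ∈ A, D̃ = j) and ν_C(A) = P(C ∈ A)
    (μt : ℕ → Measure ℝ)
    (hμt : ∀ j, μt j = Measure.map Tt (P.restrict {ω | Dt ω = j}))
    (νC : Measure ℝ) (hνC : νC = Measure.map C P)
    -- H₀(t) = ∫_{(0,t]} K(s−)⁻¹ ν_C(ds)
    (H0 : ℝ → ℝ≥0∞) (hH0 : ∀ t, H0 t = ∫⁻ s in Ioc 0 t, (P {ω | s ≤ C ω})⁻¹ ∂νC)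
    -- Ȟ₀(t) = ∫_{(0,t]} Š(s)⁻¹ μ̃₀(ds) with Š(s) = P(T > s, C ≥ s)
    (Hc0 : ℝ → ℝ≥0∞)
    (hHc0 : ∀ t, Hc0 t = ∫⁻ s in Ioc 0 t, (P {ω | s < T ω ∧ s ≤ C ω})⁻¹ ∂(μt 0))
    (𝒥 : Set ℝ) (h𝒥 : 𝒥 = {t | 0 ≤ t ∧ 0 < P {ω | t < Tt ω}}) :
    -- (i)
    (∀ t ∈ 𝒥, Hc0 t = H0 t) ↔
    -- (ii) μ̃₀(A) = ∫_A (Š(s)/K(s−)) ν_C(ds) for all Borel A ⊆ 𝒥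
    (∀ A : Set ℝ, MeasurableSet A → A ⊆ 𝒥 →
      μt 0 A = ∫⁻ s in A, (P {ω | s < T ω ∧ s ≤ C ω}) / (P {ω | s ≤ C ω}) ∂νC) :=
  censoring_identity_iff_cond_prob_given_C_general (m0 := m0) P T C hT hC hTpos hCpos Tt hTtdef Dt
    μt hμt νC hνC H0 hH0 Hc0 hHc0 𝒥 h𝒥
end

section
/- The following are equivalent: (i) Ȟ₀(t) = H₀(t) for all t ∈ 𝒥; (ii) for every Borel set A ⊆ 𝒥, μ̃₀(A) = ∫_A (1 − Σ_{j=1}^d ∫_{(0,s]} K(u−)^{-1} μ̃_j(du)) ν_C(ds). (Condition (ii) is the integrated form of the statement that P(T̃ = t, D̃ = 0 | C = t) + Σ_{j=1}^d ∫_{(0,t]} K(s−)^{-1} μ̃_j(ds) = 1 for ν_C-almost all t ∈ 𝒥.) -/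
/-!
Write `ν` for the law of `C`, `K(s-) = ν [s, ∞)`, `η = μ̃₁ + ⋯ + μ̃_d` and
`F(s) = ∫_{(0,s]} K(u-)⁻¹ η(du)`. Condition (i) says that `μ̃₀ / Š` and `ν / K(·-)` agree on `𝒥`,
i.e. `μ̃₀ = (Š / K(·-)) ν` there, and (ii) says `μ̃₀ = (1 - F) ν` there. As
`Š(s) / K(s-) = 1 - R(s) / K(s-)` with `R(s) = P(T ≤ s ≤ C)`, it suffices to show `F = R / K(·-)`
on `𝒥` under either condition. The law `β` of `C` on `{T ≤ C}` is `ν - μ̃₀`, so it has density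
`R / K(·-)`, resp. `min F 1`. Now `R(s) + β (0,s) = η (0,s]`, and by Fubini
`∫_{(0,s)} F dν + K(s-) F(s) = η (0,s]`: in the first case `F` and `R / K(·-)` solve the same
Volterra equation, whose solution is unique by a Gronwall argument; in the second the equation
forces `K(s-) F(s) ≤ R(s)`, hence `F ≤ 1`, and then `F = R / K(·-)` directly.
-/

open MeasureTheory Set Filter Topology ENNReal

theorem ENNReal.sub_eq_sub_of_add_eq_add {x y u v : ℝ≥0∞} (hx : x ≠ ∞) (hv : v ≠ ∞)
    (h : x + u = y + v) : u - v = y - x := by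
  rw [← ENNReal.add_sub_add_eq_sub_left hx, h, ENNReal.add_sub_add_eq_sub_right hv]

theorem Real.exists_seq_mem_forall_le {S : Set ℝ} (hS : S.Nonempty) :
    ∃ u : ℕ → ℝ, (∀ n, u n ∈ S) ∧ ∀ x ∈ S, ∃ n, x ≤ u n := by
  by_cases hb : BddAbove S
  · by_cases hmax : sSup S ∈ S
    · exact ⟨fun _ => sSup S, fun _ => hmax, fun x hx => ⟨0, le_csSup hb hx⟩⟩
    · obtain ⟨u, -, hlim, huS⟩ := exists_seq_tendsto_sSup hS hb
      refine ⟨u, huS, fun x hx => ?_⟩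
      have hx' : x < sSup S := (le_csSup hb hx).lt_of_ne fun h => hmax (h ▸ hx)
      exact (hlim.eventually (lt_mem_nhds hx')).exists.imp fun _ => le_of_lt
  · rw [not_bddAbove_iff] at hb
    choose u huS hu using fun n : ℕ => hb n
    exact ⟨u, huS, fun x _ => (exists_nat_ge x).imp fun n hn => hn.trans (hu n).le⟩

namespace MeasureTheory.Measure

variable {α : Type*} [MeasurableSpace α]

theorem withDensity_eq_of_add_eq {μ₁ μ₂ ν : Measure α} [IsFiniteMeasure μ₁]
    {f g : α → ℝ≥0∞} (hf : Measurable f) (hadd : μ₁ + μ₂ = ν) (hfg : ∀ᵐ x ∂ν, f x + g x = 1)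
    (h₁ : μ₁ = ν.withDensity f) : μ₂ = ν.withDensity g := by
  have hν : ν = μ₁ + ν.withDensity g := by
    rw [h₁, ← withDensity_add_left hf, withDensity_congr_ae (f := f + g) (g := 1) hfg,
      withDensity_one]
  ext s hs
  have h := congrArg (· s) (hadd.trans hν)
  simp only [Measure.add_apply] at h
  exact (ENNReal.add_right_inj (measure_ne_top μ₁ s)).1 h

theorem withDensity_inv_eq_iff_eq_withDensity {μ ρ : Measure α} {f : α → ℝ≥0∞}
    (hf : Measurable f) (hμ : ∀ᵐ x ∂μ, f x ≠ 0 ∧ f x ≠ ∞) (hρ : ∀ᵐ x ∂ρ, f x ≠ 0 ∧ f x ≠ ∞) :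
    μ.withDensity (fun x => (f x)⁻¹) = ρ ↔ μ = ρ.withDensity f := by
  constructor
  · rintro rfl
    simpa using (withDensity_inv_same (μ := μ) (f := fun x => (f x)⁻¹) hf.inv
      (hμ.mono fun x hx => ENNReal.inv_ne_zero.2 hx.2)
      (hμ.mono fun x hx => ENNReal.inv_ne_top.2 hx.1)).symm
  · rintro rfl
    exact withDensity_inv_same hf (hρ.mono fun x hx => hx.1) (hρ.mono fun x hx => hx.2)

variable {m₁ m₂ : Measure ℝ}

theorem restrict_Ioc_eq_of_forall_Ioc_eq {t : ℝ}
    (h : ∀ u ∈ Icc 0 t, m₁ (Ioc 0 u) = m₂ (Ioc 0 u)) (ht : m₂ (Ioc 0 t) ≠ ∞) :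
    m₁.restrict (Ioc 0 t) = m₂.restrict (Ioc 0 t) := by
  rcases lt_or_ge t 0 with ht0 | ht0
  · rw [Ioc_eq_empty (not_lt.2 ht0.le), restrict_empty, restrict_empty]
  have : IsFiniteMeasure (m₂.restrict (Ioc 0 t)) := ⟨by simpa [lt_top_iff_ne_top] using ht⟩
  have : IsFiniteMeasure (m₁.restrict (Ioc 0 t)) :=
    ⟨by simpa [lt_top_iff_ne_top, h t ⟨ht0, le_rfl⟩] using ht⟩
  refine ext_of_Iic _ _ fun x => ?_
  rw [restrict_apply measurableSet_Iic, restrict_apply measurableSet_Iic, inter_comm,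
    Ioc_inter_Iic]
  rcases le_total 0 (min t x) with h0 | h0
  · exact h _ ⟨h0, min_le_left _ _⟩
  · rw [Ioc_eq_empty (not_lt.2 h0), measure_empty, measure_empty]

theorem restrict_eq_of_forall_restrict_Ioc_eq {J : Set ℝ} (hJ : ∀ t ∈ J, Icc 0 t ⊆ J)
    (h₁ : ∀ᵐ x ∂m₁, 0 < x) (h₂ : ∀ᵐ x ∂m₂, 0 < x)
    (h : ∀ t ∈ J, m₁.restrict (Ioc 0 t) = m₂.restrict (Ioc 0 t)) :
    m₁.restrict J = m₂.restrict J := by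
  rcases J.eq_empty_or_nonempty with rfl | hne
  · rw [restrict_empty, restrict_empty]
  obtain ⟨u, huJ, hu⟩ := Real.exists_seq_mem_forall_le hne
  have hcover : J ∩ Ioi 0 = ⋃ n, Ioc 0 (u n) := by
    ext x
    simp only [mem_inter_iff, mem_Ioi, mem_iUnion, mem_Ioc]
    refine ⟨fun hx => (hu x hx.1).imp fun n hn => ⟨hx.2, hn⟩, fun ⟨n, hx⟩ =>
      ⟨hJ (u n) (huJ n) ⟨hx.1.le, hx.2⟩, hx.1⟩⟩
  have hpos : ∀ m : Measure ℝ, (∀ᵐ x ∂m, 0 < x) → m.restrict J = m.restrict (J ∩ Ioi 0) :=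
    fun m hm => by
      conv_lhs => rw [← restrict_eq_self_of_ae_mem (s := Ioi 0) hm]
      exact restrict_restrict' measurableSet_Ioi
  rw [hpos m₁ h₁, hpos m₂ h₂, hcover]
  exact restrict_iUnion_congr.2 fun n => h (u n) (huJ n)

theorem forall_Ioc_eq_iff_restrict_eq {J : Set ℝ} (hJ : ∀ t ∈ J, Icc 0 t ⊆ J)
    (h₁ : ∀ᵐ x ∂m₁, 0 < x) (h₂ : ∀ᵐ x ∂m₂, 0 < x) (hfin : ∀ t ∈ J, m₂ (Ioc 0 t) ≠ ∞) :
    (∀ t ∈ J, m₁ (Ioc 0 t) = m₂ (Ioc 0 t)) ↔ m₁.restrict J = m₂.restrict J := by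
  refine ⟨fun h => restrict_eq_of_forall_restrict_Ioc_eq hJ h₁ h₂ fun t ht =>
    restrict_Ioc_eq_of_forall_Ioc_eq (fun u hu => h u (hJ t ht hu)) (hfin t ht), fun h t ht => ?_⟩
  have hsub : Ioc 0 t ⊆ J := Ioc_subset_Icc_self.trans (hJ t ht)
  rw [← restrict_eq_self m₁ hsub, h, restrict_eq_self m₂ hsub]

end MeasureTheory.Measure

section Volterra

variable {ν : Measure ℝ} [IsFiniteMeasure ν]

theorem eqOn_zero_of_mul_le_setLIntegral_Ioo {D : ℝ → ℝ≥0∞} {a t : ℝ} {ε M : ℝ≥0∞}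
    (hε : ε ≠ 0) (hM : M ≠ ∞) (hDM : ∀ s ∈ Ioc a t, D s ≤ M)
    (hD : ∀ s ∈ Ioc a t, ε * D s ≤ ∫⁻ u in Ioo a s, D u ∂ν) :
    EqOn D 0 (Ioc a t) := by
  -- With `s₀` the infimum of `{D ≠ 0}`, `D` vanishes on `(a, s₀]`; on `(s₀, s₁]` with
  -- `ν (s₀, s₁] < ε`, `hD` gives `ε sup D ≤ ν (s₀, s₁] sup D`, so `D` vanishes there too.
  by_contra hne
  obtain ⟨e, he, hDe⟩ : ∃ e ∈ Ioc a t, D e ≠ 0 := by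
    simpa only [EqOn, not_forall, Pi.zero_apply, exists_prop] using hne
  set E := {s ∈ Ioc a t | D s ≠ 0}
  have hE : E.Nonempty := ⟨e, he, hDe⟩
  have hEbdd : BddBelow E := ⟨a, fun x hx => hx.1.1.le⟩
  set s₀ := sInf E
  have hlt : ∀ u ∈ Ioc a t, u < s₀ → D u = 0 := fun u hu hus =>
    not_not.mp fun h => (csInf_le hEbdd ⟨hu, h⟩).not_gt hus
  have hle : ∀ u ∈ Ioc a t, u ≤ s₀ → D u = 0 := by
    intro u hu hus
    have h0 : ∫⁻ v in Ioo a u, D v ∂ν = 0 := setLIntegral_eq_zero measurableSet_Ioo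
      fun v hv => hlt v ⟨hv.1, hv.2.le.trans hu.2⟩ (hv.2.trans_le hus)
    simpa [hε, h0] using hD u hu
  have hgt : ∀ e ∈ E, s₀ < e := fun e he => lt_of_not_ge fun h => he.2 (hle e he.1 h)
  have has₀ : a ≤ s₀ := le_csInf hE fun x hx => hx.1.1.le
  have hs₀t : s₀ < t := (hgt e ⟨he, hDe⟩).trans_le he.2
  obtain ⟨r, hr, hνr⟩ : ∃ r, s₀ < r ∧ ν (Ioc s₀ r) < ε := by
    have hlim := tendsto_measure_biInter_gt (μ := ν) (s := fun r => Ioc s₀ r) (a := s₀)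
      (fun r _ => measurableSet_Ioc.nullMeasurableSet)
      (fun i j _ hij => Ioc_subset_Ioc_right hij) ⟨s₀ + 1, by linarith, measure_ne_top _ _⟩
    have hempty : ⋂ r > s₀, Ioc s₀ r = ∅ := by
      refine eq_empty_of_forall_notMem fun x hx => ?_
      simp only [mem_iInter, mem_Ioc] at hx
      obtain ⟨hx₀, -⟩ := hx (s₀ + 1) (by linarith)
      linarith [(hx ((s₀ + x) / 2) (by linarith)).2]
    rw [hempty, measure_empty] at hlim
    exact ((hlim.eventually (gt_mem_nhds (pos_iff_ne_zero.2 hε))).and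
      self_mem_nhdsWithin).exists.imp fun r hr => ⟨hr.2, hr.1⟩
  set s₁ := min r t
  have hs₀s₁ : s₀ < s₁ := lt_min hr hs₀t
  have hsub : Ioc s₀ s₁ ⊆ Ioc a t := Ioc_subset_Ioc has₀ (min_le_right _ _)
  set M' := ⨆ s ∈ Ioc s₀ s₁, D s
  have hM' : M' ≠ ∞ := ne_top_of_le_ne_top hM (iSup₂_le fun s hs => hDM s (hsub hs))
  have key : ∀ s ∈ Ioc s₀ s₁, ε * D s ≤ ν (Ioc s₀ r) * M' := by
    intro s hs
    calc ε * D s ≤ ∫⁻ u in Ioo a s, D u ∂ν := hD s (hsub hs)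
      _ ≤ ∫⁻ u in Ioo a s, (Ioc s₀ s₁).indicator (fun _ => M') u ∂ν := by
          refine setLIntegral_mono' measurableSet_Ioo fun u hu => ?_
          rcases le_or_gt u s₀ with hus | hus
          · rw [hle u ⟨hu.1, hu.2.le.trans (hsub hs).2⟩ hus]
            exact zero_le
          · have hu' : u ∈ Ioc s₀ s₁ := ⟨hus, hu.2.le.trans hs.2⟩
            rw [indicator_of_mem hu']
            exact le_iSup₂ (f := fun s _ => D s) u hu'
      _ ≤ ∫⁻ u, (Ioc s₀ s₁).indicator (fun _ => M') u ∂ν := setLIntegral_le_lintegral _ _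
      _ = M' * ν (Ioc s₀ s₁) := lintegral_indicator_const measurableSet_Ioc M'
      _ ≤ ν (Ioc s₀ r) * M' := by
          rw [mul_comm]
          gcongr
          exact min_le_left _ _
  have hM'0 : M' = 0 := by
    by_contra h
    have : ε * M' ≤ ν (Ioc s₀ r) * M' := by
      calc ε * M' = ⨆ s ∈ Ioc s₀ s₁, ε * D s := by simp only [M', ENNReal.mul_iSup]
        _ ≤ _ := iSup₂_le key
    exact (this.trans_lt (ENNReal.mul_lt_mul_left h hM' hνr)).false
  obtain ⟨e', he'E, he's₁⟩ := exists_lt_of_csInf_lt hE hs₀s₁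
  exact he'E.2 (le_zero_iff.mp
    (hM'0 ▸ le_iSup₂ (f := fun s _ => D s) e' ⟨hgt e' he'E, he's₁.le⟩))

theorem eqOn_of_setLIntegral_Ioo_add_mul_eq {k F G : ℝ → ℝ≥0∞} {a t : ℝ} {ε M : ℝ≥0∞}
    (hF : Measurable F) (hG : Measurable G) (hε : ε ≠ 0) (hM : M ≠ ∞)
    (hk : ∀ s ∈ Ioc a t, ε ≤ k s ∧ k s ≠ ∞) (hFM : ∀ s ∈ Ioc a t, F s ≤ M)
    (hGM : ∀ s ∈ Ioc a t, G s ≤ M)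
    (h : ∀ s ∈ Ioc a t,
      ∫⁻ u in Ioo a s, F u ∂ν + k s * F s = ∫⁻ u in Ioo a s, G u ∂ν + k s * G s) :
    EqOn F G (Ioc a t) := by
  have hfin : ∀ s ∈ Ioc a t, ∀ H : ℝ → ℝ≥0∞, (∀ u ∈ Ioc a t, H u ≤ M) →
      ∫⁻ u in Ioo a s, H u ∂ν ≠ ∞ ∧ k s * H s ≠ ∞ := fun s hs H hH =>
    ⟨ne_top_of_le_ne_top (mul_ne_top hM (measure_ne_top ν _))
      ((setLIntegral_mono' measurableSet_Ioo fun u hu => hH u ⟨hu.1, hu.2.le.trans hs.2⟩).trans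
        (setLIntegral_const _ _).le),
      mul_ne_top (hk s hs).2 (ne_top_of_le_ne_top hM (hH s hs))⟩
  set D := fun s => (F s - G s) + (G s - F s)
  have hD : ∀ s ∈ Ioc a t, ε * D s ≤ ∫⁻ u in Ioo a s, D u ∂ν := by
    intro s hs
    obtain ⟨hFi, hFk⟩ := hfin s hs F hFM
    obtain ⟨hGi, hGk⟩ := hfin s hs G hGM
    calc ε * D s ≤ k s * D s := by gcongr; exact (hk s hs).1
      _ = (∫⁻ u in Ioo a s, G u ∂ν - ∫⁻ u in Ioo a s, F u ∂ν)
          + (∫⁻ u in Ioo a s, F u ∂ν - ∫⁻ u in Ioo a s, G u ∂ν) := by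
          rw [mul_add, ENNReal.mul_sub fun _ _ => (hk s hs).2,
            ENNReal.mul_sub fun _ _ => (hk s hs).2,
            ENNReal.sub_eq_sub_of_add_eq_add hFi hGk (h s hs),
            ENNReal.sub_eq_sub_of_add_eq_add hGi hFk (h s hs).symm]
      _ ≤ ∫⁻ u in Ioo a s, (G u - F u) ∂ν + ∫⁻ u in Ioo a s, (F u - G u) ∂ν :=
          add_le_add (lintegral_sub_le _ _ hF) (lintegral_sub_le _ _ hG)
      _ = ∫⁻ u in Ioo a s, D u ∂ν := by
          simp only [D, add_comm (F _ - G _)]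
          exact (lintegral_add_left (f := fun u => G u - F u) (hG.sub hF) _).symm
  intro s hs
  have h0 := eqOn_zero_of_mul_le_setLIntegral_Ioo hε (add_ne_top.2 ⟨hM, hM⟩)
    (fun s hs => add_le_add (tsub_le_self.trans (hFM s hs)) (tsub_le_self.trans (hGM s hs)))
    hD hs
  simp only [Pi.zero_apply, add_eq_zero, tsub_eq_zero_iff_le] at h0
  exact le_antisymm h0.1 h0.2

end Volterra

/-- Inverse-probability-of-censoring weighted distribution function. -/
noncomputable def ipcwCDF (k : ℝ → ℝ≥0∞) (η : Measure ℝ) (s : ℝ) : ℝ≥0∞ :=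
  ∫⁻ v in Ioc 0 s, (k v)⁻¹ ∂η

section ipcwCDF

variable {k : ℝ → ℝ≥0∞} {η : Measure ℝ}

theorem monotone_ipcwCDF : Monotone (ipcwCDF k η) :=
  fun _ _ hst => lintegral_mono_set (Ioc_subset_Ioc_right hst)

theorem ipcwCDF_le_inv_mul (hk : Antitone k) (s : ℝ) :
    ipcwCDF k η s ≤ (k s)⁻¹ * η (Ioc 0 s) :=
  (setLIntegral_mono' measurableSet_Ioc fun _ hv => ENNReal.inv_le_inv.2 (hk hv.2)).trans
    (setLIntegral_const _ _).le

theorem ipcwCDF_ne_top [IsFiniteMeasure η] (hk : Antitone k) {s : ℝ} (hs : k s ≠ 0) :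
    ipcwCDF k η s ≠ ∞ :=
  ne_top_of_le_ne_top (mul_ne_top (inv_ne_top.2 hs) (measure_ne_top _ _))
    (ipcwCDF_le_inv_mul hk s)

theorem setLIntegral_Ioo_ipcwCDF_add_mul (ν η : Measure ℝ) [IsFiniteMeasure ν] [SFinite η]
    {s : ℝ} (hs : ν (Ici s) ≠ 0) :
    ∫⁻ u in Ioo 0 s, ipcwCDF (fun v => ν (Ici v)) η u ∂ν
      + ν (Ici s) * ipcwCDF (fun v => ν (Ici v)) η s = η (Ioc 0 s) := by
  set k : ℝ → ℝ≥0∞ := fun v => ν (Ici v)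
  have hk : Antitone k := fun _ _ h => measure_mono (Ici_subset_Ici.2 h)
  have hkm : Measurable fun v => (k v)⁻¹ := hk.measurable.inv
  have hswap : ∫⁻ u in Ioo 0 s, ipcwCDF k η u ∂ν
      = ∫⁻ v in Ioc 0 s, (k v)⁻¹ * ν (Ico v s) ∂η := by
    calc ∫⁻ u in Ioo 0 s, ipcwCDF k η u ∂ν
        = ∫⁻ u in Ioo 0 s, ∫⁻ v in Ioc 0 s, (Iic u).indicator (fun v => (k v)⁻¹) v ∂η ∂ν := by
          refine setLIntegral_congr_fun measurableSet_Ioo fun u hu => ?_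
          rw [setLIntegral_indicator measurableSet_Iic, inter_comm, Ioc_inter_Iic,
            min_eq_right hu.2.le, ipcwCDF]
      _ = ∫⁻ v in Ioc 0 s, ∫⁻ u in Ioo 0 s, (Iic u).indicator (fun v => (k v)⁻¹) v ∂ν ∂η := by
          refine lintegral_lintegral_swap (Measurable.aemeasurable ?_)
          have : Function.uncurry (fun u v => (Iic u).indicator (fun v => (k v)⁻¹) v)
              = {p : ℝ × ℝ | p.2 ≤ p.1}.indicator fun p => (k p.2)⁻¹ := by
            ext p
            simp only [Function.uncurry, indicator, mem_Iic, mem_ofPred_eq]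
          rw [this]
          exact (hkm.comp measurable_snd).indicator
            (measurableSet_le measurable_snd measurable_fst)
      _ = ∫⁻ v in Ioc 0 s, (k v)⁻¹ * ν (Ico v s) ∂η := by
          refine setLIntegral_congr_fun measurableSet_Ioc fun v hv => ?_
          have : (fun u => (Iic u).indicator (fun v => (k v)⁻¹) v)
              = (Ici v).indicator fun _ => (k v)⁻¹ := by
            ext u
            simp only [indicator, mem_Iic, mem_Ici]
          simp only [this]
          rw [setLIntegral_indicator measurableSet_Ici, setLIntegral_const]
          congr 2
          ext u
          simp only [mem_inter_iff, mem_Ici, mem_Ioo, mem_Ico]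
          exact ⟨fun h => ⟨h.1, h.2.2⟩, fun h => ⟨h.1, hv.1.trans_le h.1, h.2⟩⟩
  have hsplit : ∀ v ∈ Ioc 0 s, ν (Ico v s) + k s = k v := fun v hv =>
    (measure_union ((Iio_disjoint_Ici le_rfl).mono_left Ico_subset_Iio_self)
      measurableSet_Ici).symm.trans (congrArg ν (Ico_union_Ici_eq_Ici hv.2))
  rw [hswap, ipcwCDF, ← lintegral_const_mul _ hkm, ← lintegral_add_right _ (hkm.const_mul _)]
  refine (setLIntegral_congr_fun (g := fun _ => 1) measurableSet_Ioc fun v hv => ?_).trans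
    (setLIntegral_one _)
  have hkv : k v ≠ 0 := fun h => hs (le_zero_iff.1 (h ▸ hk hv.2))
  rw [mul_comm (k s), ← mul_add, hsplit v hv, ENNReal.inv_mul_cancel hkv (measure_ne_top _ _)]

end ipcwCDF

theorem setOf_ite_eq_zero {Ω : Type*} {T C : Ω → ℝ} {D : Ω → ℕ} (hD : ∀ ω, 1 ≤ D ω) :
    {ω | (if T ω ≤ C ω then D ω else 0) = 0} = {ω | C ω < T ω} := by
  ext ω
  by_cases h : T ω ≤ C ω <;> simp [h, not_le.1, Nat.one_le_iff_ne_zero.1 (hD ω)]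

section Censoring

variable {Ω : Type*} [MeasurableSpace Ω]

/-- `K(t-) = P(C ≥ t)`. -/
def censoringSurvivalLeft (P : Measure Ω) (C : Ω → ℝ) (t : ℝ) : ℝ≥0∞ := P {ω | t ≤ C ω}

/-- `Š(t) = P(T > t, C ≥ t)`. -/
def modifiedSurvival (P : Measure Ω) (T C : Ω → ℝ) (t : ℝ) : ℝ≥0∞ := P {ω | t < T ω ∧ t ≤ C ω}

def exitedUnderObservation (P : Measure Ω) (T C : Ω → ℝ) (t : ℝ) : ℝ≥0∞ :=
  P {ω | T ω ≤ t ∧ t ≤ C ω}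

/-- `μ̃₀`. -/
noncomputable def censoredLaw (P : Measure Ω) (T C : Ω → ℝ) : Measure ℝ :=
  (P.restrict {ω | C ω < T ω}).map C

/-- `μ̃₁ + ⋯ + μ̃_d`. -/
noncomputable def uncensoredLaw (P : Measure Ω) (T C : Ω → ℝ) : Measure ℝ :=
  (P.restrict {ω | T ω ≤ C ω}).map T

noncomputable def censoringLawOnUncensored (P : Measure Ω) (T C : Ω → ℝ) : Measure ℝ :=
  (P.restrict {ω | T ω ≤ C ω}).map C

variable {P : Measure Ω} {T C : Ω → ℝ}

theorem censoringSurvivalLeft_eq_map (hC : Measurable C) :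
    censoringSurvivalLeft P C = fun t => P.map C (Ici t) :=
  funext fun _ => (Measure.map_apply hC measurableSet_Ici).symm

theorem antitone_censoringSurvivalLeft : Antitone (censoringSurvivalLeft P C) :=
  fun _ _ h => measure_mono fun _ hω => h.trans hω

theorem antitone_modifiedSurvival : Antitone (modifiedSurvival P T C) :=
  fun _ _ h => measure_mono fun _ hω => ⟨h.trans_lt hω.1, h.trans hω.2⟩

theorem modifiedSurvival_add_exitedUnderObservation (hT : Measurable T) (t : ℝ) :
    modifiedSurvival P T C t + exitedUnderObservation P T C t = censoringSurvivalLeft P C t := by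
  rw [modifiedSurvival, exitedUnderObservation, censoringSurvivalLeft,
    ← measure_inter_add_sdiff (μ := P) {ω | t ≤ C ω}
      (measurableSet_lt measurable_const hT : MeasurableSet {ω | t < T ω})]
  congr 2 <;> ext ω <;> simp [and_comm]

theorem exitedUnderObservation_add_censoringLawOnUncensored (hT : Measurable T)
    (hC : Measurable C) (hTpos : ∀ᵐ ω ∂P, 0 < T ω) (hCpos : ∀ᵐ ω ∂P, 0 < C ω) (t : ℝ) :
    exitedUnderObservation P T C t + censoringLawOnUncensored P T C (Ioo 0 t)
      = uncensoredLaw P T C (Ioc 0 t) := by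
  rw [exitedUnderObservation, censoringLawOnUncensored, uncensoredLaw,
    Measure.map_apply hC measurableSet_Ioo, Measure.map_apply hT measurableSet_Ioc,
    Measure.restrict_apply (hC measurableSet_Ioo), Measure.restrict_apply (hT measurableSet_Ioc),
    ← measure_inter_add_sdiff (T ⁻¹' Ioc 0 t ∩ {ω | T ω ≤ C ω})
      (measurableSet_le measurable_const hC : MeasurableSet {ω | t ≤ C ω})]
  congr 1 <;> refine measure_congr (μ := P) (eventuallyEq_set.2 ?_) <;>
    filter_upwards [hTpos, hCpos] with ω hT0 hC0
  · simp only [mem_ofPred_eq, mem_inter_iff, mem_preimage, mem_Ioc]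
    grind
  · simp only [mem_ofPred_eq, mem_inter_iff, mem_preimage, mem_Ioo, mem_Ioc, Set.mem_sdiff]
    grind

theorem censoredLaw_add_censoringLawOnUncensored (hT : Measurable T) (hC : Measurable C) :
    censoredLaw P T C + censoringLawOnUncensored P T C = P.map C := by
  have hcompl : {ω | C ω < T ω} = {ω | T ω ≤ C ω}ᶜ := by ext; simp
  rw [censoredLaw, censoringLawOnUncensored, ← Measure.map_add _ _ hC, hcompl, add_comm,
    Measure.restrict_add_restrict_compl (measurableSet_le hT hC)]

instance [IsFiniteMeasure P] : IsFiniteMeasure (uncensoredLaw P T C) := by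
  unfold uncensoredLaw; infer_instance

instance [IsFiniteMeasure P] : IsFiniteMeasure (censoredLaw P T C) := by
  unfold censoredLaw; infer_instance

theorem setLIntegral_Ioo_ipcwCDF_add_mul_censoringSurvivalLeft [IsFiniteMeasure P]
    (hC : Measurable C) {t : ℝ} (ht : censoringSurvivalLeft P C t ≠ 0) :
    ∫⁻ u in Ioo 0 t, ipcwCDF (censoringSurvivalLeft P C) (uncensoredLaw P T C) u ∂P.map C
      + censoringSurvivalLeft P C t * ipcwCDF (censoringSurvivalLeft P C) (uncensoredLaw P T C) t
      = uncensoredLaw P T C (Ioc 0 t) := by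
  rw [censoringSurvivalLeft_eq_map hC] at ht ⊢
  exact setLIntegral_Ioo_ipcwCDF_add_mul _ _ ht

theorem exitedUnderObservation_le (hT : Measurable T) (t : ℝ) :
    exitedUnderObservation P T C t ≤ censoringSurvivalLeft P C t :=
  (modifiedSurvival_add_exitedUnderObservation hT t).symm ▸ le_add_self

theorem measurable_exitedUnderObservation [IsFiniteMeasure P] (hT : Measurable T) :
    Measurable (exitedUnderObservation P T C) := by
  have : exitedUnderObservation P T C
      = fun t => censoringSurvivalLeft P C t - modifiedSurvival P T C t := funext fun t => by
    rw [← modifiedSurvival_add_exitedUnderObservation hT t,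
      ENNReal.add_sub_cancel_left (show modifiedSurvival P T C t ≠ ∞ from measure_ne_top _ _)]
  rw [this]
  exact antitone_censoringSurvivalLeft.measurable.sub antitone_modifiedSurvival.measurable

/-- Both sides solve the same Volterra equation, by Fubini and `R(s) + β (0,s) = η (0,s]`. -/
theorem ipcwCDF_eq_div_of_censoringLawOnUncensored_eq [IsFiniteMeasure P] (hT : Measurable T)
    (hC : Measurable C) (hTpos : ∀ᵐ ω ∂P, 0 < T ω) (hCpos : ∀ᵐ ω ∂P, 0 < C ω) {J : Set ℝ}
    (hJ : ∀ t ∈ J, Icc 0 t ⊆ J) (hkJ : ∀ t ∈ J, censoringSurvivalLeft P C t ≠ 0)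
    (hβ : ∀ t ∈ J, censoringLawOnUncensored P T C (Ioo 0 t)
      = ∫⁻ s in Ioo 0 t, exitedUnderObservation P T C s / censoringSurvivalLeft P C s ∂P.map C)
    {t : ℝ} (ht : t ∈ J) (ht0 : 0 < t) :
    ipcwCDF (censoringSurvivalLeft P C) (uncensoredLaw P T C) t
      = exitedUnderObservation P T C t / censoringSurvivalLeft P C t := by
  set k := censoringSurvivalLeft P C
  set R := exitedUnderObservation P T C
  set F := ipcwCDF k (uncensoredLaw P T C)
  have hsJ : ∀ s ∈ Ioc 0 t, s ∈ J := fun s hs => hJ t ht (Ioc_subset_Icc_self hs)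
  refine eqOn_of_setLIntegral_Ioo_add_mul_eq (ν := P.map C) (k := k) (G := fun s => R s / k s)
    (M := F t + 1)
    monotone_ipcwCDF.measurable ((measurable_exitedUnderObservation hT).div
      antitone_censoringSurvivalLeft.measurable) (hkJ t ht)
    (add_ne_top.2 ⟨ipcwCDF_ne_top antitone_censoringSurvivalLeft (hkJ t ht), one_ne_top⟩)
    (fun s hs => ⟨antitone_censoringSurvivalLeft hs.2, measure_ne_top _ _⟩)
    (fun s hs => (monotone_ipcwCDF hs.2).trans le_self_add)
    (fun s _ => (div_le_of_le_mul (by rw [one_mul]; exact exitedUnderObservation_le hT s)).trans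
      le_add_self) (fun s hs => ?_) ⟨ht0, le_rfl⟩
  rw [setLIntegral_Ioo_ipcwCDF_add_mul_censoringSurvivalLeft hC (hkJ s (hsJ s hs)),
    ← hβ s (hsJ s hs), ENNReal.mul_div_cancel (hkJ s (hsJ s hs)) (measure_ne_top _ _), add_comm]
  exact (exitedUnderObservation_add_censoringLawOnUncensored hT hC hTpos hCpos s).symm

theorem ipcwCDF_eq_div_of_censoringLawOnUncensored_eq_min [IsFiniteMeasure P] (hT : Measurable T)
    (hC : Measurable C) (hTpos : ∀ᵐ ω ∂P, 0 < T ω) (hCpos : ∀ᵐ ω ∂P, 0 < C ω) {J : Set ℝ}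
    (hJ : ∀ t ∈ J, Icc 0 t ⊆ J) (hkJ : ∀ t ∈ J, censoringSurvivalLeft P C t ≠ 0)
    (hβ : ∀ t ∈ J, censoringLawOnUncensored P T C (Ioo 0 t) = ∫⁻ s in Ioo 0 t,
      min (ipcwCDF (censoringSurvivalLeft P C) (uncensoredLaw P T C) s) 1 ∂P.map C)
    {t : ℝ} (ht : t ∈ J) (ht0 : 0 < t) :
    ipcwCDF (censoringSurvivalLeft P C) (uncensoredLaw P T C) t
      = exitedUnderObservation P T C t / censoringSurvivalLeft P C t := by
  set k := censoringSurvivalLeft P C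
  set R := exitedUnderObservation P T C
  set F := ipcwCDF k (uncensoredLaw P T C)
  have heq : ∀ s ∈ J, 0 < s → ∫⁻ u in Ioo 0 s, F u ∂P.map C + k s * F s
      = R s + ∫⁻ u in Ioo 0 s, min (F u) 1 ∂P.map C := fun s hs _ => by
    rw [setLIntegral_Ioo_ipcwCDF_add_mul_censoringSurvivalLeft hC (hkJ s hs), ← hβ s hs,
      exitedUnderObservation_add_censoringLawOnUncensored hT hC hTpos hCpos]
  have hfin : ∀ s ∈ J, 0 < s → ∫⁻ u in Ioo 0 s, F u ∂P.map C ≠ ∞ := fun s hs _ =>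
    ne_top_of_le_ne_top (measure_ne_top (uncensoredLaw P T C) (Ioc 0 s))
      (le_self_add.trans (setLIntegral_Ioo_ipcwCDF_add_mul_censoringSurvivalLeft hC (hkJ s hs)).le)
  -- Bounding `min F 1` by `F` in `heq` gives `k F ≤ R ≤ k`, so the truncation is void.
  have hF1 : ∀ s ∈ J, 0 < s → F s ≤ 1 := fun s hs hs0 => by
    refine (ENNReal.mul_le_mul_iff_right (hkJ s hs) (measure_ne_top _ _)).1 ?_
    rw [mul_one]
    refine ((ENNReal.add_le_add_iff_left (hfin s hs hs0)).1 ?_).trans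
      (exitedUnderObservation_le hT s)
    rw [heq s hs hs0, add_comm]
    exact add_le_add (lintegral_mono fun _ => min_le_left _ _) le_rfl
  have hmin : ∫⁻ u in Ioo 0 t, min (F u) 1 ∂P.map C = ∫⁻ u in Ioo 0 t, F u ∂P.map C :=
    setLIntegral_congr_fun measurableSet_Ioo fun u hu =>
      min_eq_left (hF1 u (hJ t ht ⟨hu.1.le, hu.2.le⟩) hu.1)
  rw [ENNReal.eq_div_iff (hkJ t ht) (measure_ne_top _ _)]
  have h := heq t ht ht0
  rw [hmin, add_comm (R t)] at h
  exact (ENNReal.add_right_inj (hfin t ht ht0)).1 h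


theorem modifiedSurvival_div_add_exitedUnderObservation_div (hT : Measurable T) {t : ℝ}
    [IsFiniteMeasure P] (ht : censoringSurvivalLeft P C t ≠ 0) :
    modifiedSurvival P T C t / censoringSurvivalLeft P C t
      + exitedUnderObservation P T C t / censoringSurvivalLeft P C t = 1 := by
  rw [ENNReal.div_add_div_same, modifiedSurvival_add_exitedUnderObservation hT,
    ENNReal.div_self ht (measure_ne_top _ _)]

theorem ipcwCDF_eq_div_of_censoredLaw_eq [IsFiniteMeasure P] (hT : Measurable T)
    (hC : Measurable C) (hTpos : ∀ᵐ ω ∂P, 0 < T ω) (hCpos : ∀ᵐ ω ∂P, 0 < C ω) {J : Set ℝ}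
    (hJm : MeasurableSet J) (hJ : ∀ t ∈ J, Icc 0 t ⊆ J)
    (hkJ : ∀ t ∈ J, censoringSurvivalLeft P C t ≠ 0)
    (h : (censoredLaw P T C).restrict J = ((P.map C).withDensity fun s =>
          modifiedSurvival P T C s / censoringSurvivalLeft P C s).restrict J ∨
        (censoredLaw P T C).restrict J = ((P.map C).withDensity fun s =>
          1 - ipcwCDF (censoringSurvivalLeft P C) (uncensoredLaw P T C) s).restrict J)
    {t : ℝ} (ht : t ∈ J) (ht0 : 0 < t) :
    ipcwCDF (censoringSurvivalLeft P C) (uncensoredLaw P T C) t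
      = exitedUnderObservation P T C t / censoringSurvivalLeft P C t := by
  have hadd : (censoredLaw P T C).restrict J + (censoringLawOnUncensored P T C).restrict J
      = (P.map C).restrict J := by
    rw [← Measure.restrict_add, censoredLaw_add_censoringLawOnUncensored hT hC]
  have hβ : ∀ {f g : ℝ → ℝ≥0∞}, Measurable f → (∀ s ∈ J, f s + g s = 1) →
      (censoredLaw P T C).restrict J = ((P.map C).withDensity f).restrict J →
      ∀ s ∈ J, censoringLawOnUncensored P T C (Ioo 0 s) = ∫⁻ u in Ioo 0 s, g u ∂P.map C := by
    intro f g hf hfg h s hs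
    rw [restrict_withDensity hJm] at h
    have hsub : Ioo 0 s ⊆ J := Ioo_subset_Icc_self.trans (hJ s hs)
    rw [← Measure.restrict_eq_self _ hsub, Measure.withDensity_eq_of_add_eq hf hadd
      (ae_restrict_of_forall_mem hJm hfg) h, withDensity_apply _ measurableSet_Ioo,
      Measure.restrict_restrict measurableSet_Ioo, inter_eq_left.2 hsub]
  rcases h with h | h
  · refine ipcwCDF_eq_div_of_censoringLawOnUncensored_eq hT hC hTpos hCpos hJ hkJ
      (hβ ?_ (fun s hs => modifiedSurvival_div_add_exitedUnderObservation_div hT (hkJ s hs)) h)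
      ht ht0
    exact antitone_modifiedSurvival.measurable.div antitone_censoringSurvivalLeft.measurable
  · refine ipcwCDF_eq_div_of_censoringLawOnUncensored_eq_min hT hC hTpos hCpos hJ hkJ
      (hβ (measurable_const.sub monotone_ipcwCDF.measurable) (fun s _ => ?_) h) ht ht0
    rw [min_comm]
    exact tsub_add_min

theorem setLIntegral_inv_modifiedSurvival_eq_iff [IsFiniteMeasure P] (hT : Measurable T)
    (hC : Measurable C) (hTpos : ∀ᵐ ω ∂P, 0 < T ω) (hCpos : ∀ᵐ ω ∂P, 0 < C ω) {J : Set ℝ}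
    (hJ0 : J ⊆ Ici 0) (hJ : ∀ t ∈ J, Icc 0 t ⊆ J)
    (hSJ : ∀ t ∈ J, modifiedSurvival P T C t ≠ 0) :
    (∀ t ∈ J, ∫⁻ s in Ioc 0 t, (modifiedSurvival P T C s)⁻¹ ∂censoredLaw P T C
        = ∫⁻ s in Ioc 0 t, (censoringSurvivalLeft P C s)⁻¹ ∂P.map C) ↔
      ∀ A, MeasurableSet A → A ⊆ J → censoredLaw P T C A
        = ∫⁻ s in A,
          (1 - ipcwCDF (censoringSurvivalLeft P C) (uncensoredLaw P T C) s) ∂P.map C := by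
  set k := censoringSurvivalLeft P C
  set S := modifiedSurvival P T C
  set F := ipcwCDF k (uncensoredLaw P T C)
  set μ₀ := censoredLaw P T C
  set ν := P.map C
  have hJm : MeasurableSet J :=
    Set.OrdConnected.measurableSet ⟨fun x hx y hy z hz => hJ y hy ⟨(hJ0 hx).trans hz.1, hz.2⟩⟩
  have hkJ : ∀ t ∈ J, k t ≠ 0 := fun t ht h => hSJ t ht <| le_zero_iff.1 <|
    (le_self_add.trans_eq (modifiedSurvival_add_exitedUnderObservation hT t)).trans_eq h
  have hν0 : ∀ᵐ x ∂ν, 0 < x := (ae_map_iff hC.aemeasurable measurableSet_Ioi).2 hCpos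
  have hμ0 : ∀ᵐ x ∂μ₀, 0 < x :=
    (ae_map_iff hC.aemeasurable measurableSet_Ioi).2 (ae_restrict_of_ae hCpos)
  have hi : (∀ t ∈ J, ∫⁻ s in Ioc 0 t, (S s)⁻¹ ∂μ₀ = ∫⁻ s in Ioc 0 t, (k s)⁻¹ ∂ν) ↔
      (μ₀.withDensity fun s => (S s)⁻¹).restrict J
        = (ν.withDensity fun s => (k s)⁻¹).restrict J := by
    simp only [← withDensity_apply _ measurableSet_Ioc]
    refine Measure.forall_Ioc_eq_iff_restrict_eq hJ
      ((withDensity_absolutelyContinuous _ _).ae_le hμ0)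
      ((withDensity_absolutelyContinuous _ _).ae_le hν0) fun t ht => ?_
    rw [withDensity_apply _ measurableSet_Ioc]
    exact ipcwCDF_ne_top antitone_censoringSurvivalLeft (hkJ t ht)
  have hi' : (μ₀.withDensity fun s => (S s)⁻¹).restrict J
        = (ν.withDensity fun s => (k s)⁻¹).restrict J ↔
      μ₀.restrict J = (ν.withDensity fun s => S s / k s).restrict J := by
    have hS := antitone_modifiedSurvival (P := P) (T := T) (C := C)
    rw [restrict_withDensity hJm, restrict_withDensity hJm, restrict_withDensity hJm,
      Measure.withDensity_inv_eq_iff_eq_withDensity hS.measurable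
        (ae_restrict_of_forall_mem hJm fun t ht => ⟨hSJ t ht, measure_ne_top _ _⟩)
        ((withDensity_absolutelyContinuous _ _).ae_le
          (ae_restrict_of_forall_mem hJm fun t ht => ⟨hSJ t ht, measure_ne_top _ _⟩)),
      ← withDensity_mul _ (f := fun s => (k s)⁻¹) antitone_censoringSurvivalLeft.measurable.inv
        hS.measurable]
    simp only [ENNReal.div_eq_inv_mul]
    rfl
  have hii : (∀ A, MeasurableSet A → A ⊆ J → μ₀ A = ∫⁻ s in A, (1 - F s) ∂ν) ↔
      μ₀.restrict J = (ν.withDensity fun s => 1 - F s).restrict J := by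
    rw [Measure.restrict_congr_meas hJm]
    exact forall_congr' fun A => ⟨fun h hAJ hA => (h hA hAJ).trans (withDensity_apply _ hA).symm,
      fun h hA hAJ => (h hAJ hA).trans (withDensity_apply _ hA)⟩
  have hdensity : μ₀.restrict J = (ν.withDensity fun s => S s / k s).restrict J ∨
      μ₀.restrict J = (ν.withDensity fun s => 1 - F s).restrict J →
      (ν.withDensity fun s => S s / k s).restrict J
        = (ν.withDensity fun s => 1 - F s).restrict J := by
    intro h
    rw [restrict_withDensity hJm, restrict_withDensity hJm]
    refine withDensity_congr_ae ?_
    filter_upwards [ae_restrict_mem hJm, ae_restrict_of_ae hν0] with s hs hs0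
    rw [show F s = exitedUnderObservation P T C s / k s from
      ipcwCDF_eq_div_of_censoredLaw_eq hT hC hTpos hCpos hJm hJ hkJ h hs hs0]
    exact ENNReal.eq_sub_of_add_eq (ENNReal.div_ne_top (measure_ne_top _ _) (hkJ s hs))
      (modifiedSurvival_div_add_exitedUnderObservation_div hT (hkJ s hs))
  rw [hi, hi', hii]
  exact ⟨fun h => h.trans (hdensity (.inl h)), fun h => h.trans (hdensity (.inr h)).symm⟩

theorem map_min_restrict_lt_eq_censoredLaw (hT : Measurable T) (hC : Measurable C) :
    (P.restrict {ω | C ω < T ω}).map (fun ω => min (T ω) (C ω)) = censoredLaw P T C :=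
  Measure.map_congr <| (ae_restrict_mem (measurableSet_lt hC hT)).mono fun _ hω =>
    min_eq_right (le_of_lt hω)

theorem map_min_restrict_le_eq_uncensoredLaw (hT : Measurable T) (hC : Measurable C) :
    (P.restrict {ω | T ω ≤ C ω}).map (fun ω => min (T ω) (C ω)) = uncensoredLaw P T C :=
  Measure.map_congr <| (ae_restrict_mem (measurableSet_le hT hC)).mono fun _ hω => min_eq_left hω

theorem sum_restrict_ite_eq {D : Ω → ℕ} {d : ℕ} (hT : Measurable T) (hC : Measurable C)
    (hD : Measurable D) (hDrange : ∀ ω, 1 ≤ D ω ∧ D ω ≤ d) :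
    ∑ j ∈ Finset.Icc 1 d, P.restrict {ω | (if T ω ≤ C ω then D ω else 0) = j}
      = P.restrict {ω | T ω ≤ C ω} := by
  have hm : Measurable fun ω => if T ω ≤ C ω then D ω else 0 :=
    Measurable.ite (measurableSet_le hT hC) hD measurable_const
  rw [← Measure.sum_coe_finset, ← Measure.restrict_biUnion_finset
    (s := fun j => {ω | (if T ω ≤ C ω then D ω else 0) = j})
    (fun i _ j _ hij => Set.disjoint_left.2 fun ω hi hj => hij (hi.symm.trans hj))
    fun j => hm (measurableSet_singleton j)]
  congr 1
  ext ω
  by_cases h : T ω ≤ C ω <;> simp [h, hDrange ω]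

end Censoring

theorem censoring_identity_iff_censoring_constant_sum_general
    {Ω : Type*} [m0 : MeasurableSpace Ω] (P : Measure Ω) [IsProbabilityMeasure P]
    (d : ℕ)
    (T C : Ω → ℝ) (D : Ω → ℕ)
    (hT : Measurable T) (hC : Measurable C) (hD : Measurable D)
    (hTpos : ∀ᵐ ω ∂P, 0 < T ω) (hCpos : ∀ᵐ ω ∂P, 0 < C ω)
    (hDrange : ∀ ω, 1 ≤ D ω ∧ D ω ≤ d)
    (Tt : Ω → ℝ) (hTtdef : ∀ ω, Tt ω = min (T ω) (C ω))
    (Dt : Ω → ℕ) (hDtdef : ∀ ω, Dt ω = if T ω ≤ C ω then D ω else 0)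
    (μt : ℕ → Measure ℝ)
    (hμt : ∀ j, μt j = Measure.map Tt (P.restrict {ω | Dt ω = j}))
    (νC : Measure ℝ) (hνC : νC = Measure.map C P)
    (H0 : ℝ → ℝ≥0∞) (hH0 : ∀ t, H0 t = ∫⁻ s in Ioc 0 t, (P {ω | s ≤ C ω})⁻¹ ∂νC)
    (Hc0 : ℝ → ℝ≥0∞)
    (hHc0 : ∀ t, Hc0 t = ∫⁻ s in Ioc 0 t, (P {ω | s < T ω ∧ s ≤ C ω})⁻¹ ∂(μt 0))
    (𝒥 : Set ℝ) (h𝒥 : 𝒥 = {t | 0 ≤ t ∧ 0 < P {ω | t < Tt ω}}) :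
    -- (i)
    (∀ t ∈ 𝒥, Hc0 t = H0 t) ↔
    -- (ii) μ̃₀(A) = ∫_A (1 − Σ_{j=1}^d ∫_{(0,s]} K(u−)⁻¹ μ̃_j(du)) ν_C(ds) for Borel A ⊆ 𝒥
    (∀ A : Set ℝ, MeasurableSet A → A ⊆ 𝒥 →
      μt 0 A = ∫⁻ s in A,
        (1 - ∑ j ∈ Finset.Icc 1 d, ∫⁻ u in Ioc 0 s, (P {ω | u ≤ C ω})⁻¹ ∂(μt j)) ∂νC) := by
  obtain rfl : Tt = fun ω => min (T ω) (C ω) := funext hTtdef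
  obtain rfl : Dt = fun ω => if T ω ≤ C ω then D ω else 0 := funext hDtdef
  subst hνC h𝒥
  have hμ0 : μt 0 = censoredLaw P T C := by
    rw [hμt, setOf_ite_eq_zero fun ω => (hDrange ω).1, map_min_restrict_lt_eq_censoredLaw hT hC]
  have hsum : ∀ s, ∑ j ∈ Finset.Icc 1 d, ∫⁻ u in Ioc 0 s, (P {ω | u ≤ C ω})⁻¹ ∂(μt j)
      = ipcwCDF (censoringSurvivalLeft P C) (uncensoredLaw P T C) s := fun s => by
    simp only [← lintegral_indicator measurableSet_Ioc, ipcwCDF]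
    rw [← lintegral_finsetSum_measure, Finset.sum_congr rfl fun j _ => hμt j,
      ← Measure.map_finset_sum (by fun_prop), sum_restrict_ite_eq hT hC hD hDrange,
      map_min_restrict_le_eq_uncensoredLaw hT hC]
    rfl
  simp only [hHc0, hH0, hμ0, hsum]
  refine setLIntegral_inv_modifiedSurvival_eq_iff hT hC hTpos hCpos (fun t ht => ht.1)
    (fun t ht s hs => ⟨hs.1, ht.2.trans_le (measure_mono fun ω hω => hs.2.trans_lt hω)⟩)
    fun t ht => (ht.2.trans_le (measure_mono fun ω hω => ?_)).ne'
  exact ⟨(min_le_left _ _).trans_lt' hω, ((min_le_right _ _).trans_lt' hω).le⟩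

/-- Proposition 5 (parts (5.1) ⟺ (5.4)): `Ȟ₀ = H₀` on `𝒥` is equivalent to the integrated
form of the censoring constant-sum property. -/
theorem censoring_identity_iff_censoring_constant_sum
    {Ω : Type*} [m0 : MeasurableSpace Ω] (P : Measure Ω) [IsProbabilityMeasure P]
    (d : ℕ) (hd : 1 ≤ d)
    (T C : Ω → ℝ) (D : Ω → ℕ)
    (hT : Measurable T) (hC : Measurable C) (hD : Measurable D)
    (hTpos : ∀ᵐ ω ∂P, 0 < T ω) (hCpos : ∀ᵐ ω ∂P, 0 < C ω)
    (hDrange : ∀ ω, 1 ≤ D ω ∧ D ω ≤ d)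
    (Tt : Ω → ℝ) (hTtdef : ∀ ω, Tt ω = min (T ω) (C ω))
    (Dt : Ω → ℕ) (hDtdef : ∀ ω, Dt ω = if T ω ≤ C ω then D ω else 0)
    (μt : ℕ → Measure ℝ)
    (hμt : ∀ j, μt j = Measure.map Tt (P.restrict {ω | Dt ω = j}))
    (νC : Measure ℝ) (hνC : νC = Measure.map C P)
    (H0 : ℝ → ℝ≥0∞) (hH0 : ∀ t, H0 t = ∫⁻ s in Ioc 0 t, (P {ω | s ≤ C ω})⁻¹ ∂νC)
    (Hc0 : ℝ → ℝ≥0∞)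
    (hHc0 : ∀ t, Hc0 t = ∫⁻ s in Ioc 0 t, (P {ω | s < T ω ∧ s ≤ C ω})⁻¹ ∂(μt 0))
    (𝒥 : Set ℝ) (h𝒥 : 𝒥 = {t | 0 ≤ t ∧ 0 < P {ω | t < Tt ω}}) :
    -- (i)
    (∀ t ∈ 𝒥, Hc0 t = H0 t) ↔
    -- (ii) μ̃₀(A) = ∫_A (1 − Σ_{j=1}^d ∫_{(0,s]} K(u−)⁻¹ μ̃_j(du)) ν_C(ds) for Borel A ⊆ 𝒥
    (∀ A : Set ℝ, MeasurableSet A → A ⊆ 𝒥 →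
      μt 0 A = ∫⁻ s in A,
        (1 - ∑ j ∈ Finset.Icc 1 d, ∫⁻ u in Ioc 0 s, (P {ω | u ≤ C ω})⁻¹ ∂(μt j)) ∂νC) :=
  censoring_identity_iff_censoring_constant_sum_general (m0 := m0) P d T C D hT hC hD hTpos hCpos
    hDrange Tt hTtdef Dt hDtdef μt hμt νC hνC H0 hH0 Hc0 hHc0 𝒥 h𝒥
end
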